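/- arXiv:2004.14873 — 12 statements merged into one kernel-verified Lean document; each statement's English description precedes it below -/
import Mathlib

section
/- For a ∈ ℤ^n, let g_a ∈ S_n be the minimal-length permutation sorting a into non-decreasing order, and let w_a = t_a ∘ g_a^{-1}. If w_a(i) = w_b(i) for some i ∈ {1,...,n}, then g_a^{-1}(i) = g_b^{-1}(i) and a_{g_a^{-1}(i)} = b_{g_b^{-1}(i)}. In particular, w_a = w_b implies a = b. -/
/-- The minimal-length sorting permutation, given by its explicit counting formula
(values in `{1,…,n}`): `g_a(i) = #{j : a_j < a_i} + #{j : j ≤ i and a_j = a_i}`. -/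
def gvalZ (n : ℕ) (a : Fin n → ℤ) (i : Fin n) : ℕ :=
  (Finset.univ.filter fun j => a j < a i).card +
  (Finset.univ.filter fun j => j ≤ i ∧ a j = a i).card

private lemma gvalZ_eq_card (n : ℕ) (a : Fin n → ℤ) (i : Fin n) :
    gvalZ n a i =
      (Finset.univ.filter fun j => toLex (a j, (j : ℕ)) ≤ toLex (a i, (i : ℕ))).card := by
  unfold gvalZ
  rw [← Finset.card_union_of_disjoint]
  · rw [← Finset.filter_or]
    congr 1
    ext j
    simp only [Finset.mem_filter, Finset.mem_univ, true_and, Prod.Lex.le_iff, Fin.le_def]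
    tauto
  · rw [Finset.disjoint_filter]
    rintro j _ hlt ⟨_, heq⟩
    exact absurd heq hlt.ne

private lemma gvalZ_inj (n : ℕ) (a : Fin n → ℤ) :
    Function.Injective (gvalZ n a) := by
  intro i i' h
  rw [gvalZ_eq_card, gvalZ_eq_card] at h
  set f : Fin n → ℤ ×ₗ ℕ := fun j => toLex (a j, (j : ℕ)) with hf
  have hfinj : Function.Injective f := by
    intro x y hxy
    have : ((x : ℕ)) = (y : ℕ) := congrArg (fun p => (ofLex p).2) hxy
    exact Fin.ext this
  have key : ∀ x y : Fin n,
      (Finset.univ.filter fun j => f j ≤ f x).card =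
      (Finset.univ.filter fun j => f j ≤ f y).card → f x ≤ f y → x = y := by
    intro x y hc hle
    have hsub : (Finset.univ.filter fun j => f j ≤ f x) ⊆
        (Finset.univ.filter fun j => f j ≤ f y) := by
      intro j hj
      simp only [Finset.mem_filter, Finset.mem_univ, true_and] at *
      exact hj.trans hle
    have heq := Finset.eq_of_subset_of_card_le hsub (le_of_eq hc.symm)
    have hy : y ∈ (Finset.univ.filter fun j => f j ≤ f x) := by
      rw [heq]; simp
    simp only [Finset.mem_filter, Finset.mem_univ, true_and] at hy
    exact hfinj (le_antisymm hle hy)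
  rcases le_total (f i) (f i') with hle | hle
  · exact key i i' h hle
  · exact (key i' i h.symm hle).symm

private lemma gvalZ_mem (n : ℕ) (a : Fin n → ℤ) (i : Fin n) :
    1 ≤ gvalZ n a i ∧ gvalZ n a i ≤ n := by
  rw [gvalZ_eq_card]
  constructor
  · have : i ∈ (Finset.univ.filter fun j => toLex (a j, (j : ℕ)) ≤ toLex (a i, (i : ℕ))) := by
      simp
    exact Finset.card_pos.mpr ⟨i, this⟩ 
  · calc (Finset.univ.filter fun j => toLex (a j, (j : ℕ)) ≤ toLex (a i, (i : ℕ))).card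
        ≤ (Finset.univ : Finset (Fin n)).card := Finset.card_filter_le _ _
      _ = n := by simp

private lemma gvalZ_surj (n : ℕ) (a b : Fin n → ℤ) (ja : Fin n) :
    ∃ jb : Fin n, gvalZ n b jb = gvalZ n a ja := by
  have h1 := gvalZ_mem n a ja
  set G : Fin n → Fin n := fun j => ⟨gvalZ n b j - 1, by
    have := gvalZ_mem n b j; omega⟩ with hG
  have hGinj : Function.Injective G := by
    intro x y hxy
    apply gvalZ_inj n b
    have hx := gvalZ_mem n b x
    have hy := gvalZ_mem n b y
    have : gvalZ n b x - 1 = gvalZ n b y - 1 := congrArg Fin.val hxy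
    omega
  have hGsurj := Finite.surjective_of_injective hGinj
  obtain ⟨jb, hjb⟩ := hGsurj ⟨gvalZ n a ja - 1, by omega⟩
  refine ⟨jb, ?_⟩
  have := gvalZ_mem n b jb
  have : gvalZ n b jb - 1 = gvalZ n a ja - 1 := congrArg Fin.val hjb
  omega

/-- With `w_a = t_a ∘ g_a⁻¹` (whose value at position `k = g_a(j)` is
`j + n·a_j`, 1-based), if `w_a(i) = w_b(i)` for some `i ∈ {1,…,n}` then
`g_a⁻¹(i) = g_b⁻¹(i)` and `a_{g_a⁻¹(i)} = b_{g_b⁻¹(i)}`.  In particular `w_a = w_b`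
implies `a = b`. -/
theorem stmt_1 (n : ℕ) (a b : Fin n → ℤ) :
    (∀ ja jb : Fin n, gvalZ n a ja = gvalZ n b jb →
      ((ja : ℤ) + 1) + n * a ja = ((jb : ℤ) + 1) + n * b jb →
      ja = jb ∧ a ja = b jb) ∧
    ((∀ ja jb : Fin n, gvalZ n a ja = gvalZ n b jb →
      ((ja : ℤ) + 1) + n * a ja = ((jb : ℤ) + 1) + n * b jb) → a = b) := by
  have main : ∀ ja jb : Fin n,
      ((ja : ℤ) + 1) + n * a ja = ((jb : ℤ) + 1) + n * b jb →
      ja = jb ∧ a ja = b jb := by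
    intro ja jb h
    have hn : (0 : ℤ) < n := by exact_mod_cast ja.pos
    have hja : ((ja : ℤ)) < n := by exact_mod_cast ja.isLt
    have hjb : ((jb : ℤ)) < n := by exact_mod_cast jb.isLt
    have hja0 : (0 : ℤ) ≤ (ja : ℤ) := Int.ofNat_nonneg _
    have hjb0 : (0 : ℤ) ≤ (jb : ℤ) := Int.ofNat_nonneg _
    set d : ℤ := b jb - a ja with hd
    have hkey : ((ja : ℤ)) - (jb : ℤ) = n * d := by rw [hd]; ring_nf; linarith
    have hd0 : d = 0 := by
      rcases lt_trichotomy d 0 with hlt | heq | hgt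
      · have h1 : (n : ℤ) * d ≤ -n := by nlinarith
        linarith
      · exact heq
      · have h1 : (n : ℤ) ≤ n * d := by nlinarith
        linarith
    have hab : a ja = b jb := by rw [hd] at hd0; linarith
    have : ((ja : ℤ)) = (jb : ℤ) := by rw [hd0, mul_zero] at hkey; linarith
    exact ⟨Fin.ext (by exact_mod_cast this), hab⟩
  constructor
  · intro ja jb _ h
    exact main ja jb h
  · intro hyp
    funext ja
    obtain ⟨jb, hjb⟩ := gvalZ_surj n a b ja
    have harith := hyp ja jb hjb.symm
    obtain ⟨heq, hval⟩ := main ja jb harith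
    rw [heq] at hval ⊢
    exact hval
end

section
/- Every affine permutation w with 0 < w(1) < w(2) < ... < w(n) and degree r > 0 (where degree is (1/n)·Σ_{i=1}^n (w(i) − i)) can be uniquely written in the form w = (s_{ν_r}···s_2 s_1)π ··· (s_{ν_2}···s_2 s_1)π (s_{ν_1}···s_2 s_1)π, where π is the affine permutation i ↦ i+1, the s_i are simple transpositions, and n > ν_1 ≥ ν_2 ≥ ... ≥ ν_r ≥ 0 (parts equal to zero give empty products of transpositions). -/
/-!
Write `c_ν = (s_ν ⋯ s_1) π`. On the window `1, …, n`, passing from `w` to `w ∘ c_ν` deletes the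
entry `w (ν + 1)` and appends `w (ν + 1) + n`, so it raises the degree by one; the result is again
sorted exactly when `w 0 < w (ν + 1)`. Conversely, `w 0 = w n - n` lies between `w ν` and
`w (ν + 1)` for exactly one `ν < n`, and when the degree is positive, undoing the move at this `ν`
gives a sorted `w'` of degree one less with `w' 0 < w' (ν + 1)`, which says precisely that all
factors of `w'` are at most `ν`. Induction on the degree gives existence, and uniqueness because
the last factor `ν` of any admissible product is recovered from `w` as the position of `w 0` in
the window.
-/

/-- The simple transposition `s_i` as an `n`-periodic permutation of `ℤ`:
it adds 1 to integers congruent to `i` and subtracts 1 from those congruent to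
`i+1` mod `n`. -/
def sFun (n i : ℕ) : ℤ → ℤ := fun x =>
  if x % n = (i : ℤ) % n then x + 1
  else if x % n = ((i : ℤ) + 1) % n then x - 1
  else x

/-- `sprod n ν = s_ν ∘ ⋯ ∘ s_2 ∘ s_1` (the empty product for `ν = 0`). -/
def sprod (n : ℕ) : ℕ → (ℤ → ℤ)
  | 0 => id
  | k + 1 => sFun n (k + 1) ∘ sprod n k

/-- The affine permutation `π : i ↦ i + 1`. -/
def piF : ℤ → ℤ := fun x => x + 1

open Finset

lemma eq_of_emod_eq_of_abs_sub_lt {n x y : ℤ} (h : x % n = y % n) (hxy : |y - x| < n) :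
    x = y :=
  (sub_eq_zero.1 (Int.eq_zero_of_abs_lt_dvd (Int.ModEq.dvd h) hxy)).symm

section SimpleTransposition

variable {n : ℕ}

lemma sFun_apply_self (n i : ℕ) : sFun n i i = i + 1 := by
  simp [sFun]

lemma add_one_emod_ne (hn : 2 ≤ n) (i : ℤ) : (i + 1) % n ≠ i % n := fun h => by
  have := eq_of_emod_eq_of_abs_sub_lt h (by simp; omega)
  omega

lemma sFun_apply_add_one (hn : 2 ≤ n) (i : ℕ) : sFun n i (i + 1) = i := by
  simp [sFun, add_one_emod_ne hn]

lemma sFun_apply_of_ne {i : ℕ} {x : ℤ} (hx : x ∈ Icc 1 (n : ℤ)) (hi : 1 ≤ i) (hin : i < n)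
    (hxi : x ≠ i) (hxi' : x ≠ i + 1) : sFun n i x = x := by
  rw [mem_Icc] at hx
  have hne : ∀ y : ℤ, y ∈ Icc 1 (n : ℤ) → x ≠ y → x % n ≠ y % n := fun y hy hxy h =>
    hxy (eq_of_emod_eq_of_abs_sub_lt h (by rw [mem_Icc] at hy; rw [abs_lt]; omega))
  rw [sFun, if_neg (hne i (by simp; omega) hxi), if_neg (hne (i + 1) (by simp; omega) hxi')]

lemma sFun_add (n i : ℕ) (x : ℤ) : sFun n i (x + n) = sFun n i x + n := by
  simp only [sFun, ← Int.emod_eq_add_self_emod]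
  split_ifs <;> ring

lemma sFun_involutive (hn : 2 ≤ n) (i : ℕ) : Function.Involutive (sFun n i) := by
  intro x
  by_cases h₁ : x % n = i % n
  · have h : (x + 1) % n = (i + 1) % n := Int.ModEq.add_right 1 h₁
    simp [sFun, h₁, h, add_one_emod_ne hn]
  by_cases h₂ : x % n = (i + 1) % n
  · have h : (x - 1) % n = i % n := by
      have := Int.ModEq.sub_right 1 h₂
      rwa [add_sub_cancel_right] at this
    rw [show sFun n i x = x - 1 by simp [sFun, h₂, add_one_emod_ne hn]]
    simp [sFun, h]
  simp [sFun, h₁, h₂]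

lemma sFun_mem_Icc (hn : 2 ≤ n) {i : ℕ} {x : ℤ} (hx : x ∈ Icc 1 (n : ℤ)) (hi : 1 ≤ i)
    (hin : i < n) : sFun n i x ∈ Icc 1 (n : ℤ) := by
  rw [mem_Icc] at hx ⊢
  by_cases h₁ : x = i
  · rw [h₁, sFun_apply_self]; omega
  by_cases h₂ : x = i + 1
  · rw [h₂, sFun_apply_add_one hn]; omega
  rw [sFun_apply_of_ne (mem_Icc.2 hx) hi hin h₁ h₂]
  exact hx

lemma sum_Icc_comp_sFun (hn : 2 ≤ n) {i : ℕ} (hi : 1 ≤ i) (hin : i < n) (g : ℤ → ℤ) :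
    ∑ x ∈ Icc 1 (n : ℤ), g (sFun n i x) = ∑ x ∈ Icc 1 (n : ℤ), g x :=
  sum_nbij' (sFun n i) (sFun n i) (fun _ hx => sFun_mem_Icc hn hx hi hin)
    (fun _ hx => sFun_mem_Icc hn hx hi hin) (fun x _ => sFun_involutive hn i x)
    (fun x _ => sFun_involutive hn i x) fun _ _ => rfl

end SimpleTransposition

section Factor

variable {n : ℕ}

lemma sprod_add (n ν : ℕ) (x : ℤ) : sprod n ν (x + n) = sprod n ν x + n := by
  induction ν with
  | zero => rfl
  | succ ν ih => simp only [sprod, Function.comp_apply, ih, sFun_add]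

lemma sprod_bijective (hn : 2 ≤ n) (ν : ℕ) : Function.Bijective (sprod n ν) := by
  induction ν with
  | zero => exact Function.bijective_id
  | succ ν ih => exact (sFun_involutive hn _).bijective.comp ih

lemma sum_Icc_comp_sprod (hn : 2 ≤ n) {ν : ℕ} (hν : ν < n) (g : ℤ → ℤ) :
    ∑ x ∈ Icc 1 (n : ℤ), g (sprod n ν x) = ∑ x ∈ Icc 1 (n : ℤ), g x := by
  induction ν generalizing g with
  | zero => rfl
  | succ ν ih =>
    exact (ih (by omega) (g ∘ sFun n (ν + 1))).trans (sum_Icc_comp_sFun hn (by omega) hν g)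

def factor (n ν : ℕ) : ℤ → ℤ := sprod n ν ∘ piF

lemma factor_succ (n ν : ℕ) : factor n (ν + 1) = sFun n (ν + 1) ∘ factor n ν := rfl

lemma factor_add (n ν : ℕ) (x : ℤ) : factor n ν (x + n) = factor n ν x + n := by
  show sprod n ν (x + n + 1) = sprod n ν (x + 1) + n
  rw [add_right_comm, sprod_add]

lemma factor_bijective (hn : 2 ≤ n) (ν : ℕ) : Function.Bijective (factor n ν) :=
  (sprod_bijective hn ν).comp (Equiv.addRight 1).bijective

lemma factor_apply_zero (n ν : ℕ) : factor n ν 0 = ν + 1 := by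
  induction ν with
  | zero => rfl
  | succ ν ih =>
    rw [factor_succ, Function.comp_apply, ih]
    exact_mod_cast sFun_apply_self n (ν + 1)

lemma factor_apply_n (n ν : ℕ) : factor n ν n = ν + 1 + n := by
  simpa [factor_apply_zero] using factor_add n ν 0

lemma factor_apply_of_lt {ν : ℕ} {k : ℤ} (hνk : ν < k) (hkn : k < n) : factor n ν k = k + 1 := by
  induction ν with
  | zero => rfl
  | succ ν ih =>
    push_cast at hνk
    rw [factor_succ, Function.comp_apply, ih (by omega)]
    exact sFun_apply_of_ne (by simp; omega) (by omega) (by omega) (by push_cast; omega)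
      (by push_cast; omega)

lemma factor_apply_of_le (hn : 2 ≤ n) {ν : ℕ} {k : ℤ} (hk : 1 ≤ k) (hkν : k ≤ ν) (hν : ν < n) :
    factor n ν k = k := by
  induction ν with
  | zero => omega
  | succ ν ih =>
    push_cast at hkν
    rw [factor_succ, Function.comp_apply]
    rcases (show k ≤ ν ∨ k = ν + 1 by omega) with hkν | rfl
    · rw [ih hkν (by omega)]
      exact sFun_apply_of_ne (by simp; omega) (by omega) hν (by push_cast; omega)
        (by push_cast; omega)
    · rw [factor_apply_of_lt (by omega) (by omega)]
      exact_mod_cast sFun_apply_add_one hn (ν + 1)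

lemma factor_apply_of_mem_Ico (hn : 2 ≤ n) {ν : ℕ} {k : ℤ} (hk : 1 ≤ k) (hkn : k < n) (hν : ν < n) :
    factor n ν k = if k ≤ ν then k else k + 1 := by
  split_ifs with hkν
  · exact factor_apply_of_le hn hk hkν hν
  · exact factor_apply_of_lt (by omega) hkn

lemma sum_Icc_add_one {g : ℤ → ℤ} (hg : ∀ x, g (x + n) = g x + n) :
    ∑ x ∈ Icc 1 (n : ℤ), g (x + 1) = ∑ x ∈ Icc 1 (n : ℤ), g x + n := by
  have hshift : ∑ x ∈ Icc 1 (n : ℤ), g (x + 1) = ∑ x ∈ Icc (1 + 1) ((n : ℤ) + 1), g x := by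
    rw [← map_add_right_Icc, sum_map]
    rfl
  have hleft := sum_insert (f := g) (by simp : (1 : ℤ) ∉ Icc (1 + 1) ((n : ℤ) + 1))
  have hright := sum_insert (f := g) (by simp : (n : ℤ) + 1 ∉ Icc 1 (n : ℤ))
  rw [insert_Icc_add_one_left_eq_Icc (by omega)] at hleft
  rw [insert_Icc_right_eq_Icc_add_one (by omega), hleft] at hright
  have hper := hg 1
  rw [add_comm 1] at hper
  linarith

lemma sum_Icc_comp_factor (hn : 2 ≤ n) {ν : ℕ} (hν : ν < n) {w : ℤ → ℤ}
    (hw : ∀ x, w (x + n) = w x + n) :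
    ∑ x ∈ Icc 1 (n : ℤ), (w (factor n ν x) - x) = ∑ x ∈ Icc 1 (n : ℤ), (w x - x) + n := by
  have h : ∑ x ∈ Icc 1 (n : ℤ), w (factor n ν x) = ∑ x ∈ Icc 1 (n : ℤ), w x + n := by
    rw [← sum_Icc_comp_sprod hn hν w]
    exact sum_Icc_add_one (g := w ∘ sprod n ν) fun x => by simp [sprod_add, hw]
  rw [sum_sub_distrib, sum_sub_distrib, h]
  ring

end Factor

section Window

variable {n : ℕ} {w : ℤ → ℤ}

lemma strictMonoOn_of_window (hinc : ∀ i : ℤ, 1 ≤ i → i < n → w i < w (i + 1)) :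
    StrictMonoOn w (Set.Icc 1 n) :=
  strictMonoOn_of_lt_add_one Set.ordConnected_Icc fun i _ hi hi' =>
    hinc i hi.1 (by have := hi'.2; omega)

lemma monotoneOn_sub_of_window (hinc : ∀ i : ℤ, 1 ≤ i → i < n → w i < w (i + 1)) :
    MonotoneOn (fun i => w i - i) (Set.Icc 1 n) :=
  monotoneOn_of_le_add_one Set.ordConnected_Icc fun i _ hi hi' => by
    have := hinc i hi.1 (by have := hi'.2; omega)
    omega

end Window

structure IsGrassmannian (n r : ℕ) (w : ℤ → ℤ) : Prop where
  bijective : Function.Bijective w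
  apply_add : ∀ i : ℤ, w (i + n) = w i + n
  pos : 0 < w 1
  window_lt : ∀ i : ℤ, 1 ≤ i → i < n → w i < w (i + 1)
  degree : ∑ i ∈ Icc (1 : ℤ) n, (w i - i) = n * r

def SplitsAt (n : ℕ) (w : ℤ → ℤ) (ν : ℕ) : Prop :=
  (∀ k : ℤ, 1 ≤ k → k ≤ ν → w k < w 0) ∧ ∀ k : ℤ, ν < k → k ≤ n → w 0 < w k

namespace IsGrassmannian

variable {n r : ℕ} {w : ℤ → ℤ}

lemma apply_n (h : IsGrassmannian n r w) : w n = w 0 + n := by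
  simpa using h.apply_add 0

lemma n_lt_apply_n (hn : 0 < n) (h : IsGrassmannian n (r + 1) w) : (n : ℤ) < w n := by
  have hle : ∑ i ∈ Icc (1 : ℤ) n, (w i - i) ≤ ∑ i ∈ Icc (1 : ℤ) n, (w n - n) :=
    sum_le_sum fun i hi => by
      rw [mem_Icc] at hi
      exact monotoneOn_sub_of_window h.window_lt hi (by simp; omega) hi.2
  rw [h.degree, sum_const, Int.card_Icc, add_sub_cancel_right, Int.toNat_natCast,
    nsmul_eq_mul] at hle
  have := le_of_mul_le_mul_left hle (by exact_mod_cast hn)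
  push_cast at this
  omega

lemma eq_id (hn : 0 < n) (h : IsGrassmannian n 0 w) : w = id := by
  have hnonneg : ∀ i ∈ Icc (1 : ℤ) n, 0 ≤ w i - i := fun i hi => by
    rw [mem_Icc] at hi
    have h1 : w 1 - 1 ≤ w i - i :=
      monotoneOn_sub_of_window h.window_lt (by simp; omega) (by simp; omega) hi.1
    have := h.pos
    omega
  have hzero := (sum_eq_zero_iff_of_nonneg hnonneg).1 (by simpa using h.degree)
  have hper : Function.Periodic (fun x => w x - x) n := fun x => by
    simp only [h.apply_add]
    ring
  funext x
  obtain ⟨y, hy, hxy⟩ := hper.exists_mem_Ioc (by exact_mod_cast hn) x 0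
  rw [zero_add, Set.mem_Ioc] at hy
  have := hzero y (mem_Icc.2 ⟨by omega, hy.2⟩)
  rw [id]
  omega

lemma exists_splitsAt (hn : 0 < n) (h : IsGrassmannian n r w) : ∃ ν < n, SplitsAt n w ν := by
  set ν := Nat.findGreatest (fun k : ℕ => w k < w 0) (n - 1) with hν
  have hνn : ν < n := by
    have := Nat.findGreatest_le (P := fun k : ℕ => w k < w 0) (n - 1)
    omega
  refine ⟨ν, hνn, fun k hk hkν => ?_, fun k hνk hkn => ?_⟩
  · have hspec : w ν < w 0 := Nat.findGreatest_of_ne_zero hν.symm (by omega)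
    exact ((strictMonoOn_of_window h.window_lt).monotoneOn ⟨hk, by omega⟩ ⟨by omega, by omega⟩
      hkν).trans_lt hspec
  · rcases (show k < n ∨ k = n by omega) with hk | rfl
    · lift k to ℕ using (by omega)
      have hk' : ¬ w k < w 0 := Nat.findGreatest_is_greatest (by exact_mod_cast hνk) (by omega)
      have hne : w k ≠ w 0 := fun he => by
        have := h.bijective.1 he
        omega
      omega
    · rw [h.apply_n]
      omega

end IsGrassmannian

lemma isGrassmannian_id {n : ℕ} : IsGrassmannian n 0 id where
  bijective := Function.bijective_id
  apply_add _ := rfl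
  pos := one_pos
  window_lt i _ _ := lt_add_one i
  degree := by simp

namespace SplitsAt

variable {n ν μ : ℕ} {w : ℤ → ℤ}

lemma eq (h : SplitsAt n w ν) (h' : SplitsAt n w μ) (hν : ν ≤ n) (hμ : μ ≤ n) : ν = μ := by
  by_contra hne
  rcases Nat.lt_or_gt_of_ne hne with hlt | hlt
  · exact (h'.1 μ (by omega) le_rfl).asymm (h.2 μ (by exact_mod_cast hlt) (by exact_mod_cast hμ))
  · exact (h.1 ν (by omega) le_rfl).asymm (h'.2 ν (by exact_mod_cast hlt) (by exact_mod_cast hν))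

lemma lt_apply_add_one_iff (h : SplitsAt n w μ) (hν : ν < n) : w 0 < w (ν + 1) ↔ μ ≤ ν :=
  ⟨fun h0 => by
    by_contra hlt
    exact (h.1 (ν + 1) (by omega) (by exact_mod_cast not_le.1 hlt)).asymm h0,
   fun hμν => h.2 _ (by omega) (by omega)⟩

end SplitsAt

section Step

variable {n r ν : ℕ} {w : ℤ → ℤ}

lemma splitsAt_comp_factor (hn : 2 ≤ n) (hper : ∀ i : ℤ, w (i + n) = w i + n)
    (hinc : ∀ i : ℤ, 1 ≤ i → i < n → w i < w (i + 1)) (hν : ν < n) :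
    SplitsAt n (w ∘ factor n ν) ν := by
  have hmono := strictMonoOn_of_window hinc
  simp only [SplitsAt, Function.comp_apply, factor_apply_zero]
  refine ⟨fun k hk hkν => ?_, fun k hνk hkn => ?_⟩
  · rw [factor_apply_of_le hn hk hkν hν]
    exact hmono ⟨hk, by omega⟩ ⟨by omega, by omega⟩ (by omega)
  · rcases (show k < n ∨ k = n by omega) with hk | rfl
    · rw [factor_apply_of_lt hνk hk]
      exact hmono ⟨by omega, by omega⟩ ⟨by omega, by omega⟩ (by omega)
    · rw [factor_apply_n, hper]
      omega

lemma IsGrassmannian.comp_factor (hn : 2 ≤ n) (h : IsGrassmannian n r w) (hν : ν < n)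
    (h0 : w 0 < w (ν + 1)) : IsGrassmannian n (r + 1) (w ∘ factor n ν) where
  bijective := h.bijective.comp (factor_bijective hn ν)
  apply_add i := by simp only [Function.comp_apply, factor_add, h.apply_add]
  pos := by
    have := h.window_lt 1 le_rfl (by omega)
    have := h.pos
    rw [Function.comp_apply, factor_apply_of_mem_Ico hn le_rfl (by omega) hν]
    split_ifs <;> omega
  window_lt i hi hin := by
    have hmono := strictMonoOn_of_window h.window_lt
    simp only [Function.comp_apply]
    rcases (show i + 1 < n ∨ i + 1 = n by omega) with hi' | hi'
    · rw [factor_apply_of_mem_Ico hn hi hin hν, factor_apply_of_mem_Ico hn (by omega) hi' hν]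
      split_ifs <;> exact hmono ⟨by omega, by omega⟩ ⟨by omega, by omega⟩ (by omega)
    · rw [hi', factor_apply_n, h.apply_add, factor_apply_of_mem_Ico hn hi hin hν]
      have hle : w (if i ≤ ν then i else i + 1) ≤ w n := by
        split_ifs <;> exact hmono.monotoneOn ⟨by omega, by omega⟩ ⟨by omega, le_rfl⟩ (by omega)
      rw [h.apply_n] at hle
      omega
  degree := by
    show ∑ i ∈ Icc 1 (n : ℤ), (w (factor n ν i) - i) = _
    rw [sum_Icc_comp_factor hn hν h.apply_add, h.degree]
    push_cast
    ring

lemma IsGrassmannian.exists_eq_comp_factor (hn : 2 ≤ n)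
    (h : IsGrassmannian n (r + 1) w) (hs : SplitsAt n w ν) (hν : ν < n) :
    ∃ w', IsGrassmannian n r w' ∧ w' 0 < w' (ν + 1) ∧ w = w' ∘ factor n ν := by
  let e := Equiv.ofBijective _ (factor_bijective hn ν)
  set w' := w ∘ e.symm
  have hw' (x : ℤ) : w' (factor n ν x) = w x := congrArg w (e.symm_apply_apply x)
  have hlow {k : ℤ} (hk : 1 ≤ k) (hkν : k ≤ ν) : w' k = w k := by
    simpa [factor_apply_of_le hn hk hkν hν] using hw' k
  have hmid : w' (ν + 1) = w 0 := by simpa [factor_apply_zero] using hw' 0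
  have hhigh {k : ℤ} (hνk : ν < k) (hkn : k < n) : w' (k + 1) = w k := by
    simpa [factor_apply_of_lt hνk hkn] using hw' k
  have hper' (x : ℤ) : w' (x + n) = w' x + n := by
    obtain ⟨y, rfl⟩ := (factor_bijective hn ν).2 x
    rw [← factor_add, hw', hw', h.apply_add]
  have hwn := h.n_lt_apply_n (by omega)
  have hinc := h.window_lt
  refine ⟨w', ⟨h.bijective.comp e.symm.bijective, hper', ?_, fun i hi hin => ?_, ?_⟩, ?_,
    funext fun x => (hw' x).symm⟩
  · rcases Nat.eq_zero_or_pos ν with rfl | hν0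
    · rw [show (1 : ℤ) = ((0 : ℕ) : ℤ) + 1 by simp, hmid]
      have := h.apply_n
      omega
    · rw [hlow le_rfl (by omega)]
      exact h.pos
  · rcases (show i < ν ∨ i = ν ∨ i = ν + 1 ∨ ν + 1 < i by omega) with hi' | rfl | rfl | hi'
    · rw [hlow hi hi'.le, hlow (by omega) hi']
      exact hinc i hi hin
    · rw [hlow hi le_rfl, hmid]
      exact hs.1 _ hi le_rfl
    · rw [hmid, hhigh (by omega) hin]
      exact hs.2 _ (by omega) (by omega)
    · rw [show i = i - 1 + 1 by ring, hhigh (by omega) (by omega), sub_add_cancel,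
        hhigh (by omega) hin]
      simpa using hinc (i - 1) (by omega) (by omega)
  · have hdeg := sum_Icc_comp_factor hn hν hper'
    simp only [hw', h.degree] at hdeg
    push_cast at hdeg
    linarith
  · have h0 : w' n = w' 0 + n := by simpa using hper' 0
    rw [hmid]
    rcases (show ν + 1 < n ∨ ν + 1 = n by omega) with hν' | hν'
    · have hlast : w' n = w (n - 1) := by simpa using hhigh (k := n - 1) (by omega) (by omega)
      have hlt : w (n - 1) < w n := by simpa using hinc (n - 1) (by omega) (by omega)
      have := h.apply_n
      omega
    · rw [show (n : ℤ) = ν + 1 by omega, hmid] at h0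
      omega

end Step

def factorProd (n : ℕ) (l : List ℕ) : ℤ → ℤ := (l.map (factor n)).foldr (· ∘ ·) id

lemma factorProd_append_singleton (n : ℕ) (l : List ℕ) (a : ℕ) :
    factorProd n (l ++ [a]) = factorProd n l ∘ factor n a := by
  induction l with
  | nil => rfl
  | cons b l ih =>
    simp only [factorProd, List.cons_append, List.map_cons, List.foldr_cons] at ih ⊢
    rw [ih]
    rfl

section FactorProd

variable {n : ℕ} {l : List ℕ}

lemma isGrassmannian_factorProd (hn : 2 ≤ n) (hs : l.Pairwise (· ≤ ·)) (hl : ∀ x ∈ l, x < n) :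
    IsGrassmannian n l.length (factorProd n l) ∧
      ∀ ν < n, (∀ x ∈ l, x ≤ ν) → factorProd n l 0 < factorProd n l (ν + 1) := by
  induction l using List.reverseRecOn with
  | nil => exact ⟨isGrassmannian_id, fun ν _ _ => by simp [factorProd]⟩
  | append_singleton l a ih =>
    rw [List.pairwise_append] at hs
    obtain ⟨hg, hlt⟩ := ih hs.1 fun x hx => hl x (List.mem_append_left _ hx)
    have ha : a < n := hl a (by simp)
    have hla : ∀ x ∈ l, x ≤ a := fun x hx => hs.2.2 x hx a (by simp)
    rw [factorProd_append_singleton, List.length_append, List.length_singleton]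
    refine ⟨hg.comp_factor hn ha (hlt a ha hla), fun ν hν hle => ?_⟩
    exact ((splitsAt_comp_factor hn hg.apply_add hg.window_lt ha).lt_apply_add_one_iff hν).2
      (hle a (by simp))

lemma splitsAt_factorProd_append (hn : 2 ≤ n) {a : ℕ} (hs : (l ++ [a]).Pairwise (· ≤ ·))
    (hl : ∀ x ∈ l ++ [a], x < n) : SplitsAt n (factorProd n (l ++ [a])) a := by
  have hg := (isGrassmannian_factorProd hn (List.pairwise_append.1 hs).1
    fun x hx => hl x (List.mem_append_left _ hx)).1
  rw [factorProd_append_singleton]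
  exact splitsAt_comp_factor hn hg.apply_add hg.window_lt (hl a (by simp))

lemma factorProd_zero_lt_iff (hn : 2 ≤ n) (hs : l.Pairwise (· ≤ ·)) (hl : ∀ x ∈ l, x < n)
    {ν : ℕ} (hν : ν < n) : factorProd n l 0 < factorProd n l (ν + 1) ↔ ∀ x ∈ l, x ≤ ν := by
  refine ⟨fun h0 => ?_, (isGrassmannian_factorProd hn hs hl).2 ν hν⟩
  rcases l.eq_nil_or_concat' with rfl | ⟨l, a, rfl⟩
  · simp
  have haν := ((splitsAt_factorProd_append hn hs hl).lt_apply_add_one_iff hν).1 h0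
  intro x hx
  rcases List.mem_append.1 hx with hx | hx
  · exact ((List.pairwise_append.1 hs).2.2 x hx a (by simp)).trans haν
  · rwa [List.mem_singleton.1 hx]

end FactorProd

theorem IsGrassmannian.existsUnique_factorProd {n r : ℕ} {w : ℤ → ℤ} (hn : 2 ≤ n)
    (h : IsGrassmannian n r w) :
    ∃! l : List ℕ, l.length = r ∧ l.Pairwise (· ≤ ·) ∧ (∀ x ∈ l, x < n) ∧ w = factorProd n l := by
  induction r generalizing w with
  | zero =>
    exact ⟨[], ⟨rfl, List.Pairwise.nil, by simp, h.eq_id (by omega)⟩,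
      fun l hl => List.eq_nil_of_length_eq_zero hl.1⟩
  | succ r ih =>
    obtain ⟨ν, hν, hs⟩ := h.exists_splitsAt (by omega)
    obtain ⟨w', hw', h0, rfl⟩ := h.exists_eq_comp_factor hn hs hν
    obtain ⟨l, ⟨hlen, hsort, hbd, rfl⟩, huniq⟩ := ih hw'
    have hlν := (factorProd_zero_lt_iff hn hsort hbd hν).1 h0
    refine ⟨l ++ [ν], ⟨by simp [hlen], ?_, ?_, (factorProd_append_singleton n l ν).symm⟩, ?_⟩
    · exact List.pairwise_append.2 ⟨hsort, List.pairwise_singleton _ _,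
        fun x hx y hy => List.mem_singleton.1 hy ▸ hlν x hx⟩
    · intro x hx
      rcases List.mem_append.1 hx with hx | hx
      · exact hbd x hx
      · rwa [List.mem_singleton.1 hx]
    rintro m ⟨hlen', hsort', hbd', heq⟩
    rcases m.eq_nil_or_concat' with rfl | ⟨m, b, rfl⟩
    · simp at hlen'
    have hsν := splitsAt_comp_factor hn hw'.apply_add hw'.window_lt hν
    rw [heq] at hsν
    obtain rfl : b = ν :=
      (splitsAt_factorProd_append hn hsort' hbd').eq hsν (hbd' b (by simp)).le hν.le
    rw [factorProd_append_singleton] at heq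
    rw [huniq m ⟨by simpa using hlen', (List.pairwise_append.1 hsort').1,
      fun x hx => hbd' x (List.mem_append_left _ hx),
      (factor_bijective hn b).2.injective_comp_right heq⟩]

-- The list is `l = [ν_r, …, ν_1]`, so `ν_1 ≥ ⋯ ≥ ν_r` becomes `l.Pairwise (· ≤ ·)`.
theorem stmt_2_general (n : ℕ) (hn : 2 ≤ n) (w : ℤ → ℤ)
    (hbij : Function.Bijective w) (hper : ∀ i : ℤ, w (i + n) = w i + n)
    (hpos : 0 < w 1) (hinc : ∀ i : ℤ, 1 ≤ i → i < n → w i < w (i + 1))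
    (r : ℕ)
    (hdeg : ∑ i ∈ Finset.Icc (1 : ℤ) n, (w i - i) = n * r) :
    ∃! l : List ℕ, l.length = r ∧ l.Pairwise (· ≤ ·) ∧ (∀ x ∈ l, x < n) ∧
      w = (l.map fun ν => sprod n ν ∘ piF).foldr (· ∘ ·) id :=
  IsGrassmannian.existsUnique_factorProd hn ⟨hbij, hper, hpos, hinc, hdeg⟩

/-- Every affine permutation `w` with `0 < w 1 < ⋯ < w n` of degree
`r > 0` can be uniquely written as
`w = (s_{ν_r}⋯s_1)π ⋯ (s_{ν_2}⋯s_1)π (s_{ν_1}⋯s_1)π` with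
`n > ν_1 ≥ ν_2 ≥ ⋯ ≥ ν_r ≥ 0`; here the list `l = [ν_r, …, ν_1]` is sorted
non-decreasingly with all entries `< n` and length `r`. -/
theorem stmt_2 (n : ℕ) (hn : 2 ≤ n) (w : ℤ → ℤ)
    (hbij : Function.Bijective w) (hper : ∀ i : ℤ, w (i + n) = w i + n)
    (hpos : 0 < w 1) (hinc : ∀ i : ℤ, 1 ≤ i → i < n → w i < w (i + 1))
    (r : ℕ) (hr : 0 < r)
    (hdeg : ∑ i ∈ Finset.Icc (1 : ℤ) n, (w i - i) = n * r) :
    ∃! l : List ℕ, l.length = r ∧ l.Pairwise (· ≤ ·) ∧ (∀ x ∈ l, x < n) ∧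
      w = (l.map fun ν => sprod n ν ∘ piF).foldr (· ∘ ·) id :=
  stmt_2_general n hn w hbij hper hpos hinc r hdeg
end

section
/- Let m, n be coprime positive integers and let p_m be the affine permutation with window [0, m, 2m, ..., (n−1)m]. An affine permutation ω satisfies ω(x+m) > ω(x) for all x ∈ ℤ (i.e., ω is m-stable) if and only if, writing ω·p_m in window notation [x_1,...,x_n], one has x_1 < x_2 < ... < x_n < x_1 + mn. -/
/-!
Since `ω` commutes with translation by `n`, the condition `ω x < ω (x + m)` depends only on
`x` modulo `n`. As `m` is invertible modulo `n`, the residues of `0, m, 2m, …, (n-1)m`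
exhaust `ℤ / n`, so `m`-stability reduces to `ω (m j) < ω (m (j + 1))` for `0 ≤ j < n`.
For `j < n - 1` these are the inequalities `x_{j+1} < x_{j+2}` of the window of `ω ∘ p_m`,
and for `j = n - 1` periodicity turns `ω (m n) = ω 0 + m n` into `x_n < x_1 + m n`.
-/

/-- The affine permutation `p_m` with window `[0, m, 2m, …, (n−1)m]`, extended
`n`-periodically to all of `ℤ`. -/
def pmF (m n : ℕ) : ℤ → ℤ := fun i => m * ((i - 1) % n) + n * ((i - 1) / n)

lemma pmF_of_mem_window (m n : ℕ) {i : ℤ} (h1 : 1 ≤ i) (h2 : i ≤ n) :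
    pmF m n i = m * (i - 1) := by
  have h0 : (0 : ℤ) ≤ i - 1 := by omega
  have hlt : i - 1 < (n : ℤ) := by omega
  simp only [pmF, Int.emod_eq_of_lt h0 hlt, Int.ediv_eq_zero_of_lt h0 hlt, mul_zero, add_zero]

lemma Int.exists_eq_mul_add_mul_of_coprime {m n : ℕ} (hco : Nat.Coprime m n) (hn : 0 < n)
    (x : ℤ) : ∃ j k : ℤ, 0 ≤ j ∧ j < n ∧ x = m * j + n * k := by
  have bezout : (m : ℤ) * Nat.gcdA m n + n * Nat.gcdB m n = 1 := by
    have := Nat.gcd_eq_gcd_ab m n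
    rw [hco] at this
    exact_mod_cast this.symm
  set a : ℤ := Nat.gcdA m n * x
  refine ⟨a % n, Nat.gcdB m n * x + m * (a / n), Int.emod_nonneg _ (by omega),
    Int.emod_lt_of_pos _ (by omega), ?_⟩
  have hdiv := Int.mul_ediv_add_emod a n
  linear_combination (-x) * bezout - m * hdiv

section Periodic

variable {n : ℕ} {ω : ℤ → ℤ}

lemma map_add_mul_of_map_add (hper : ∀ i : ℤ, ω (i + n) = ω i + n) (x k : ℤ) :
    ω (x + n * k) = ω x + n * k := by
  have := AddConstMapClass.map_add_zsmul
    (⟨ω, hper⟩ : AddConstMap ℤ ℤ (n : ℤ) (n : ℤ)) x k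
  rw [smul_eq_mul, mul_comm k] at this
  exact this

lemma stable_iff_forall_lt_window (m : ℕ) (hn : 0 < n) (hco : Nat.Coprime m n)
    (hper : ∀ i : ℤ, ω (i + n) = ω i + n) :
    (∀ x : ℤ, ω x < ω (x + m)) ↔
      ∀ j : ℤ, 0 ≤ j → j < n → ω (m * j) < ω (m * j + m) := by
  refine ⟨fun h j _ _ => h _, fun h x => ?_⟩
  obtain ⟨j, k, hj0, hjn, rfl⟩ := Int.exists_eq_mul_add_mul_of_coprime hco hn x
  rw [add_right_comm, map_add_mul_of_map_add hper, map_add_mul_of_map_add hper]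
  exact add_lt_add_left (h j hj0 hjn) _

lemma window_pmF_iff (m : ℕ) (hn : 0 < n) (hper : ∀ i : ℤ, ω (i + n) = ω i + n) :
    ((∀ i : ℤ, 1 ≤ i → i < n → ω (pmF m n i) < ω (pmF m n (i + 1))) ∧
        ω (pmF m n n) < ω (pmF m n 1) + m * n) ↔
      ∀ j : ℤ, 0 ≤ j → j < n → ω (m * j) < ω (m * j + m) := by
  have hlast : ω (m * (n - 1 : ℤ) + m) = ω (pmF m n 1) + m * n := by
    have hshift : (m : ℤ) * (n - 1) + m = m * (1 - 1) + n * m := by ring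
    rw [pmF_of_mem_window m n le_rfl (by omega), hshift, map_add_mul_of_map_add hper,
      mul_comm (n : ℤ)]
  have hinner : ∀ i : ℤ, 1 ≤ i → i < n →
      (ω (pmF m n i) < ω (pmF m n (i + 1)) ↔ ω (m * (i - 1)) < ω (m * (i - 1) + m)) := by
    intro i hi1 hin
    rw [pmF_of_mem_window m n hi1 hin.le, pmF_of_mem_window m n (by omega) (by omega)]
    ring_nf
  rw [pmF_of_mem_window m n (by omega) le_rfl, ← hlast]
  constructor
  · rintro ⟨hwin, hclose⟩ j hj0 hjn
    rcases (show j + 1 < n ∨ j = n - 1 by omega) with hj | rfl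
    · simpa using (hinner (j + 1) (by omega) hj).1 (hwin (j + 1) (by omega) hj)
    · exact hclose
  · intro h
    exact ⟨fun i hi1 hin => (hinner i hi1 hin).2 (h _ (by omega) (by omega)),
      h _ (by omega) (by omega)⟩

end Periodic

theorem stmt_3_general (m n : ℕ) (hn : 0 < n) (hco : Nat.Coprime m n)
    (ω : ℤ → ℤ)
    (hper : ∀ i : ℤ, ω (i + n) = ω i + n) :
    (∀ x : ℤ, ω x < ω (x + m)) ↔
      ((∀ i : ℤ, 1 ≤ i → i < n → ω (pmF m n i) < ω (pmF m n (i + 1))) ∧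
        ω (pmF m n n) < ω (pmF m n 1) + m * n) := by
  rw [stable_iff_forall_lt_window m hn hco hper, window_pmF_iff m hn hper]

/-- For coprime positive `m, n`, an affine permutation `ω` is
`m`-stable (`ω(x+m) > ω(x)` for all `x`) iff the window `[x_1,…,x_n]` of `ω ∘ p_m`
satisfies `x_1 < x_2 < ⋯ < x_n < x_1 + mn`. -/
theorem stmt_3 (m n : ℕ) (hm : 0 < m) (hn : 0 < n) (hco : Nat.Coprime m n)
    (ω : ℤ → ℤ) (hbij : Function.Bijective ω)
    (hper : ∀ i : ℤ, ω (i + n) = ω i + n) :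
    (∀ x : ℤ, ω x < ω (x + m)) ↔
      ((∀ i : ℤ, 1 ≤ i → i < n → ω (pmF m n i) < ω (pmF m n (i + 1))) ∧
        ω (pmF m n n) < ω (pmF m n 1) + m * n) :=
  stmt_3_general m n hn hco ω hper
end

section
/- An affine permutation ω is m-stable if and only if, for every i ∈ {1,...,n}, the set M_ω^i = {x ∈ ℤ : ω(x) ≥ i} is (m,n)-invariant, i.e., closed under addition of both m and n. -/
/-!
Stability is the statement `ω x ≤ ω (x + m)` for all `x` (strictness comes from injectivity),
i.e. every level set `{x | i ≤ ω x}` with `i ∈ ℤ` is closed under `+ m`. Because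
`ω (x + k n) = ω x + k n`, translating by multiples of `n` carries the level set of `i` onto
that of `i - k n`, so the levels `1, …, n` already represent all of them.
-/

section Periodic

variable {n : ℤ} {ω : ℤ → ℤ}

theorem map_sub_mul_of_map_add (hper : ∀ x, ω (x + n) = ω x + n) (x k : ℤ) :
    ω (x - k * n) = ω x - k * n := by
  simpa [sub_eq_add_neg] using
    AddConstMapClass.map_add_zsmul (AddConstMap.mk ω hper : AddConstMap ℤ ℤ n n) x (-k)

theorem map_le_map_add_of_forall_Icc (hn : 0 < n) (hper : ∀ x, ω (x + n) = ω x + n) {m : ℤ}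
    (h : ∀ i, 1 ≤ i → i ≤ n → ∀ x, i ≤ ω x → i ≤ ω (x + m)) (x : ℤ) :
    ω x ≤ ω (x + m) := by
  set k := (ω x - 1) / n
  have hdiv : n * k + (ω x - 1) % n = ω x - 1 := Int.mul_ediv_add_emod _ _
  have hmod_nonneg : 0 ≤ (ω x - 1) % n := Int.emod_nonneg _ hn.ne'
  have hmod_lt : (ω x - 1) % n < n := Int.emod_lt_of_pos _ hn
  have hshift := h ((ω x - 1) % n + 1) (by omega) (by omega) (x - k * n)
    (by rw [map_sub_mul_of_map_add hper]; linarith)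
  rw [sub_add_eq_add_sub, map_sub_mul_of_map_add hper] at hshift
  linarith

end Periodic

/-- An affine permutation `ω` is `m`-stable iff for every
`i ∈ {1,…,n}` the set `M_ω^i = {x : ω(x) ≥ i}` is `(m,n)`-invariant, i.e. closed
under adding `m` and adding `n`. -/
theorem stmt_5 (m n : ℕ) (hm : 0 < m) (hn : 0 < n)
    (ω : ℤ → ℤ) (hbij : Function.Bijective ω)
    (hper : ∀ i : ℤ, ω (i + n) = ω i + n) :
    (∀ x : ℤ, ω x < ω (x + m)) ↔
      ∀ i : ℤ, 1 ≤ i → i ≤ n →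
        ∀ x : ℤ, i ≤ ω x → i ≤ ω (x + m) ∧ i ≤ ω (x + n) := by
  constructor
  · intro hstable i _ _ x hx
    exact ⟨hx.trans (hstable x).le, by rw [hper]; omega⟩
  · intro hinv x
    have hle := map_le_map_add_of_forall_Icc (by exact_mod_cast hn) hper
      (fun i h1 h2 x hx ↦ (hinv i h1 h2 x hx).1) x
    exact hle.lt_of_ne (hbij.injective.ne (by omega))
end

section
/- For a, b ∈ ℤ_{≥0}^n, if the window notation of w_a is lexicographically greater than that of w_b, then the window notation of w_{π·a} is lexicographically greater than that of w_{π·b}, where π·(a_1,...,a_n) = (a_n + 1, a_1, ..., a_{n−1}). Moreover w_{π·a} = π ∘ w_a. -/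
/-! `w_{π·a} = π ∘ w_a` because the window of `t_{π·a}` is the window of `t_a` rotated by one
place and shifted by one; rotating does not change the sorted window, and the shift commutes with
sorting and preserves the lexicographic order. -/

/-- The action `π·(a_1,…,a_n) = (a_n + 1, a_1, …, a_{n−1})` (0-based indexing,
using the cyclic structure of `Fin n`). -/
def piAct (n : ℕ) [NeZero n] (a : Fin n → ℕ) : Fin n → ℕ :=
  fun i => a (i - 1) + if i = 0 then 1 else 0

/-- The window of `w_a = t_a ∘ g_a⁻¹`: the increasing rearrangement of the values
`i + n·a_i` (1-based) of the window of `t_a`. -/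
def winF (n : ℕ) (a : Fin n → ℕ) : List ℤ :=
  List.insertionSort (· ≤ ·) (List.ofFn fun j : Fin n => ((j : ℤ) + 1) + n * (a j : ℤ))

theorem List.Lex.map {α β : Type*} {r : α → α → Prop} {s : β → β → Prop} {f : α → β}
    (hf : ∀ x y, r x y → s (f x) (f y)) {l₁ l₂ : List α} (h : List.Lex r l₁ l₂) :
    List.Lex s (l₁.map f) (l₂.map f) := by
  induction h with
  | nil => exact .nil
  | cons _ ih => exact .cons ih
  | rel h => exact .rel (hf _ _ h)

theorem List.Perm.insertionSort_eq {α : Type*} {r : α → α → Prop} [DecidableRel r]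
    [Std.Total r] [IsTrans α r] [Std.Antisymm r] {l₁ l₂ : List α} (h : l₁.Perm l₂) :
    l₁.insertionSort r = l₂.insertionSort r :=
  ((perm_insertionSort _ _).trans (h.trans (perm_insertionSort _ _).symm)).eq_of_pairwise'
    (pairwise_insertionSort _ _) (pairwise_insertionSort _ _)

theorem Fin.intCast_val_sub_one_add_one {n : ℕ} [NeZero n] (i : Fin n) :
    ((i - 1 : Fin n) : ℤ) + 1 = i + if i = 0 then (n : ℤ) else 0 := by
  obtain ⟨m, rfl⟩ := Nat.exists_eq_succ_of_ne_zero (NeZero.ne n)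
  rw [Fin.coe_sub_one]
  split_ifs with hi
  · simp [hi]
  · have : (i : ℕ) ≠ 0 := Fin.val_ne_zero_iff.mpr hi
    omega

/-- `j ↦ t_a(j + 1)`, the window of `t_a` read with 0-based indices. -/
def translationWindow (n : ℕ) (a : Fin n → ℕ) (j : Fin n) : ℤ :=
  ((j : ℤ) + 1) + n * (a j : ℤ)

theorem winF_eq_insertionSort (n : ℕ) (a : Fin n → ℕ) :
    winF n a = (List.ofFn (translationWindow n a)).insertionSort (· ≤ ·) :=
  rfl

theorem translationWindow_piAct (n : ℕ) [NeZero n] (a : Fin n → ℕ) (i : Fin n) :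
    translationWindow n (piAct n a) i = translationWindow n a (i - 1) + 1 := by
  have hpred := Fin.intCast_val_sub_one_add_one i
  simp only [translationWindow, piAct]
  split_ifs at * <;> push_cast at * <;> linarith

theorem winF_piAct (n : ℕ) [NeZero n] (a : Fin n → ℕ) :
    winF n (piAct n a) = (winF n a).map (· + 1) := by
  have hrotate : (List.ofFn (translationWindow n (piAct n a))).Perm
      ((List.ofFn (translationWindow n a)).map (· + 1)) := by
    rw [List.map_ofFn, funext (translationWindow_piAct n a)]
    exact Equiv.Perm.ofFn_comp_perm (Equiv.subRight 1) ((· + 1) ∘ translationWindow n a)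
  rw [winF_eq_insertionSort, winF_eq_insertionSort, hrotate.insertionSort_eq,
    List.map_insertionSort _ _ _ _ fun _ _ _ _ => (add_le_add_iff_right 1).symm]

/-- If the window of `w_a` is lexicographically greater than that of
`w_b`, then the window of `w_{π·a}` is lexicographically greater than that of
`w_{π·b}`.  Moreover `w_{π·a} = π ∘ w_a`, i.e. the window of `w_{π·a}` is the
window of `w_a` shifted by `1`. -/
theorem stmt_6 (n : ℕ) [NeZero n] (a b : Fin n → ℕ) :
    (List.Lex (· < ·) (winF n b) (winF n a) →
      List.Lex (· < ·) (winF n (piAct n b)) (winF n (piAct n a))) ∧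
    winF n (piAct n a) = (winF n a).map (· + 1) := by
  refine ⟨fun h => ?_, winF_piAct n a⟩
  rw [winF_piAct, winF_piAct]
  exact h.map fun _ _ => (add_lt_add_iff_right 1).mpr
end

section
/- Let c = m/n with m, n coprime positive integers, and for a ∈ ℤ_{≥0}^n define the weight wt(a) ∈ ℚ^n by wt(a)_i = a_i − (g_a(i) − 1)·c, where g_a is the minimal-length sorting permutation. Then the map a ↦ wt(a) is injective on ℤ_{≥0}^n, and moreover wt(a)_i ≠ wt(a)_{i+1} for all a and all i ∈ {1,...,n−1}. -/
/-- The minimal-length sorting permutation via its counting formula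
(values in `{1,…,n}`): `g_a(i) = #{j : a_j < a_i} + #{j : j ≤ i and a_j = a_i}`. -/
def gvalN (n : ℕ) (a : Fin n → ℕ) (i : Fin n) : ℕ :=
  (Finset.univ.filter fun j => a j < a i).card +
  (Finset.univ.filter fun j => j ≤ i ∧ a j = a i).card

lemma gvalN_ge_one (n : ℕ) (a : Fin n → ℕ) (i : Fin n) : 1 ≤ gvalN n a i := by
  unfold gvalN
  have hi : i ∈ Finset.univ.filter fun j => j ≤ i ∧ a j = a i := by simp
  have := Finset.card_pos.mpr ⟨i, hi⟩
  omega

lemma gvalN_le (n : ℕ) (a : Fin n → ℕ) (i : Fin n) : gvalN n a i ≤ n := by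
  unfold gvalN
  have hdisj : Disjoint (Finset.univ.filter fun j => a j < a i)
      (Finset.univ.filter fun j => j ≤ i ∧ a j = a i) := by
    simp only [Finset.disjoint_left, Finset.mem_filter]
    rintro x ⟨-, hx⟩ ⟨-, -, hx'⟩
    omega
  rw [← Finset.card_union_of_disjoint hdisj]
  have h := Finset.card_le_univ ((Finset.univ.filter fun j => a j < a i) ∪
    (Finset.univ.filter fun j => j ≤ i ∧ a j = a i))
  simpa using h

lemma gvalN_lt_of_lt (n : ℕ) (a : Fin n → ℕ) (p q : Fin n) (hpq : a p < a q) :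
    gvalN n a p < gvalN n a q := by
  have h4 : (Finset.univ.filter fun j => a j < a q).card < gvalN n a q := by
    unfold gvalN
    have hq : q ∈ Finset.univ.filter fun j => j ≤ q ∧ a j = a q := by simp
    have := Finset.card_pos.mpr ⟨q, hq⟩
    omega
  have h0 : gvalN n a p ≤ (Finset.univ.filter fun j => a j < a p).card +
      (Finset.univ.filter fun j => a j = a p).card := by
    unfold gvalN
    have : (Finset.univ.filter fun j => j ≤ p ∧ a j = a p).card ≤
        (Finset.univ.filter fun j => a j = a p).card := by
      apply Finset.card_le_card
      intro x
      simp only [Finset.mem_filter]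
      tauto
    omega
  have hdisj : Disjoint (Finset.univ.filter fun j => a j < a p)
      (Finset.univ.filter fun j => a j = a p) := by
    simp only [Finset.disjoint_left, Finset.mem_filter]
    rintro x ⟨-, hx⟩ ⟨-, hx'⟩
    omega
  have h2 : (Finset.univ.filter fun j => a j < a p).card +
      (Finset.univ.filter fun j => a j = a p).card ≤
      (Finset.univ.filter fun j => a j < a q).card := by
    rw [← Finset.card_union_of_disjoint hdisj]
    apply Finset.card_le_card
    intro x
    simp only [Finset.mem_union, Finset.mem_filter, Finset.mem_univ, true_and]
    omega
  omega

lemma gvalN_lt_of_eq (n : ℕ) (a : Fin n → ℕ) (p q : Fin n) (hpq : p < q)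
    (hae : a p = a q) : gvalN n a p < gvalN n a q := by
  unfold gvalN
  have h1 : (Finset.univ.filter fun j => a j < a p).card =
      (Finset.univ.filter fun j => a j < a q).card := by rw [hae]
  have h2 : (Finset.univ.filter fun j => j ≤ p ∧ a j = a p).card <
      (Finset.univ.filter fun j => j ≤ q ∧ a j = a q).card := by
    apply Finset.card_lt_card
    constructor
    · intro x
      simp only [Finset.mem_filter]
      rintro ⟨-, hx1, hx2⟩
      exact ⟨Finset.mem_univ _, le_trans hx1 (le_of_lt hpq), by omega⟩
    · intro hsub
      have hq : q ∈ Finset.univ.filter fun j => j ≤ q ∧ a j = a q := by simp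
      have := hsub hq
      simp only [Finset.mem_filter] at this
      exact absurd this.2.1 (not_le.mpr hpq)
  omega

lemma gvalN_ne (n : ℕ) (a : Fin n → ℕ) (p q : Fin n) (hpq : p < q) :
    gvalN n a p ≠ gvalN n a q := by
  rcases lt_trichotomy (a p) (a q) with h | h | h
  · exact Nat.ne_of_lt (gvalN_lt_of_lt n a p q h)
  · exact Nat.ne_of_lt (gvalN_lt_of_eq n a p q hpq h)
  · exact (Nat.ne_of_lt (gvalN_lt_of_lt n a q p h)).symm

lemma key (m n : ℕ) (hn : 0 < n) (hco : Nat.Coprime m n)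
    (x y g h : ℕ) (hg1 : 1 ≤ g) (hgn : g ≤ n) (hh1 : 1 ≤ h) (hhn : h ≤ n)
    (heq : (x : ℚ) - ((g : ℚ) - 1) * ((m : ℚ) / n) =
      (y : ℚ) - ((h : ℚ) - 1) * ((m : ℚ) / n)) : x = y ∧ g = h := by
  have hn0 : (n : ℚ) ≠ 0 := Nat.cast_ne_zero.mpr hn.ne'
  have heq2 : (x : ℚ) * n - ((g : ℚ) - 1) * m = (y : ℚ) * n - ((h : ℚ) - 1) * m := by
    field_simp at heq
    linarith
  have hz : (x : ℤ) * n - ((g : ℤ) - 1) * m = (y : ℤ) * n - ((h : ℤ) - 1) * m := by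
    exact_mod_cast heq2
  have hd : (n : ℤ) ∣ ((g : ℤ) - h) * m := ⟨(x : ℤ) - y, by ring_nf; ring_nf at hz; linarith⟩
  have hcop : IsCoprime ((n : ℤ)) ((m : ℤ)) := by
    rw [Int.isCoprime_iff_gcd_eq_one, Int.gcd_natCast_natCast]
    exact Nat.Coprime.gcd_eq_one (Nat.Coprime.symm hco)
  have hnd : (n : ℤ) ∣ (g : ℤ) - h := hcop.dvd_of_dvd_mul_right hd
  have hgh : (g : ℤ) = h := by
    by_contra h0
    have hne : (g : ℤ) - h ≠ 0 := sub_ne_zero.mpr h0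
    have habs : (n : ℤ) ∣ |(g : ℤ) - h| := (dvd_abs _ _).mpr hnd
    have hle : (n : ℤ) ≤ |(g : ℤ) - h| := Int.le_of_dvd (abs_pos.mpr hne) habs
    have hg' : (g : ℤ) ≤ n := by exact_mod_cast hgn
    have hh' : (h : ℤ) ≤ n := by exact_mod_cast hhn
    have hg1' : (1 : ℤ) ≤ g := by exact_mod_cast hg1
    have hh1' : (1 : ℤ) ≤ h := by exact_mod_cast hh1
    rcases abs_cases ((g : ℤ) - h) with ⟨he, -⟩ | ⟨he, -⟩ <;> omega
  have hghn : g = h := by exact_mod_cast hgh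
  refine ⟨?_, hghn⟩
  subst hghn
  have : (x : ℤ) * n = (y : ℤ) * n := by linarith
  have hn' : (n : ℤ) ≠ 0 := Int.natCast_ne_zero.mpr hn.ne'
  have := mul_right_cancel₀ hn' this
  exact_mod_cast this

/-- For `c = m/n` with `m, n` coprime positive integers, the weight
map `a ↦ wt(a)`, `wt(a)_i = a_i − (g_a(i) − 1)·m/n`, is injective on `ℤ_{≥0}^n`,
and adjacent coordinates of any weight are distinct. -/
theorem stmt_8 (m n : ℕ) (hm : 0 < m) (hn : 0 < n) (hco : Nat.Coprime m n) :
    Function.Injective (fun (a : Fin n → ℕ) (i : Fin n) =>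
      (a i : ℚ) - ((gvalN n a i : ℚ) - 1) * ((m : ℚ) / n)) ∧
    ∀ (a : Fin n → ℕ) (i j : Fin n), (j : ℕ) = (i : ℕ) + 1 →
      (a i : ℚ) - ((gvalN n a i : ℚ) - 1) * ((m : ℚ) / n) ≠
        (a j : ℚ) - ((gvalN n a j : ℚ) - 1) * ((m : ℚ) / n) := by
  constructor
  · intro a b hab
    funext i
    have h := congrFun hab i
    simp only at h
    exact (key m n hn hco (a i) (b i) (gvalN n a i) (gvalN n b i)
      (gvalN_ge_one n a i) (gvalN_le n a i) (gvalN_ge_one n b i) (gvalN_le n b i) h).1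
  · intro a i j hji hcontra
    have hij : i < j := by
      rw [Fin.lt_def]
      omega
    exact gvalN_ne n a i j hij
      (key m n hn hco (a i) (a j) (gvalN n a i) (gvalN n a j)
        (gvalN_ge_one n a i) (gvalN_le n a i) (gvalN_ge_one n a j) (gvalN_le n a j) hcontra).2
end

section
/- Let c = m/n with m, n coprime positive integers, and let μ be a partition of n. For a pair (a, T) with a ∈ ℤ_{≥0}^n and T a standard Young tableau of shape μ, define the weight wt(a,T) ∈ ℚ^n by wt(a,T)_i = a_i − ct_T(g_a(i))·c, where ct_T(k) is the content of the box of T labeled k and g_a is the minimal sorting permutation. Then wt(a,T) = wt(b,S) implies a = b and T = S. -/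
/-- A standard Young tableau of shape `μ` with `n` boxes: a bijective labelling of
the cells of `μ` by `{1,…,n}` (here `Fin n`), strictly increasing along rows and
columns. -/
structure StdYT (n : ℕ) (μ : YoungDiagram) where
  label : {c : ℕ × ℕ // c ∈ μ.cells} ≃ Fin n
  row_lt : ∀ c d : {c : ℕ × ℕ // c ∈ μ.cells},
    c.1.1 = d.1.1 → c.1.2 < d.1.2 → label c < label d
  col_lt : ∀ c d : {c : ℕ × ℕ // c ∈ μ.cells},
    c.1.2 = d.1.2 → c.1.1 < d.1.1 → label c < label d

/-- The content (column minus row) of the box of `T` labelled `k`. -/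
def ctOf {n : ℕ} {μ : YoungDiagram} (T : StdYT n μ) (k : Fin n) : ℤ :=
  ((T.label.symm k).1.2 : ℤ) - ((T.label.symm k).1.1 : ℤ)

/-- `g` is the minimal-length permutation sorting `a` non-decreasingly. -/
def IsMinSort {n : ℕ} (a : Fin n → ℕ) (g : Equiv.Perm (Fin n)) : Prop :=
  ∀ i j : Fin n, g i < g j ↔ (a i < a j ∨ (a i = a j ∧ i < j))

/-- Labels strictly increase to the southeast. -/
lemma StdYT.label_lt_label {n : ℕ} {μ : YoungDiagram} (T : StdYT n μ)
    (c d : {c : ℕ × ℕ // c ∈ μ.cells})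
    (h1 : c.1.1 ≤ d.1.1) (h2 : c.1.2 ≤ d.1.2) (hne : c ≠ d) :
    T.label c < T.label d := by
  rcases h1.lt_or_eq with h1 | h1
  · rcases h2.lt_or_eq with h2 | h2
    · have hmid : (c.1.1, d.1.2) ∈ μ.cells := by
        rw [YoungDiagram.mem_cells]
        exact μ.up_left_mem h1.le le_rfl ((YoungDiagram.mem_cells _).mp d.2)
      exact (T.row_lt c ⟨(c.1.1, d.1.2), hmid⟩ rfl h2).trans
        (T.col_lt ⟨(c.1.1, d.1.2), hmid⟩ d rfl h1)
    · exact T.col_lt c d h2 h1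
  · have h2' : c.1.2 < d.1.2 := by
      rcases h2.lt_or_eq with h2 | h2
      · exact h2
      · exact absurd (Subtype.ext (Prod.ext h1 h2)) hne
    exact T.row_lt c d h1 h2'

/-- Hook-type bound: for cells `x, y` of `μ`, `x.2 + y.1 + 1 ≤ |μ|`. -/
lemma content_bound {n : ℕ} {μ : YoungDiagram} (hμ : μ.cells.card = n)
    {x y : ℕ × ℕ} (hx : x ∈ μ.cells) (hy : y ∈ μ.cells) :
    x.2 + y.1 + 1 ≤ n := by
  classical
  set F1 : Finset (ℕ × ℕ) := (Finset.range (x.2 + 1)).image (fun j => (x.1, j)) with hF1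
  set F2 : Finset (ℕ × ℕ) := (Finset.range (y.1 + 1)).image (fun i => (i, y.2)) with hF2
  have hc1 : F1.card = x.2 + 1 := by
    rw [hF1, Finset.card_image_of_injective _ (fun a b h => by simpa using h),
      Finset.card_range]
  have hc2 : F2.card = y.1 + 1 := by
    rw [hF2, Finset.card_image_of_injective _ (fun a b h => by simpa using h),
      Finset.card_range]
  have hsub : F1 ∪ F2 ⊆ μ.cells := by
    intro p hp
    rcases Finset.mem_union.mp hp with hp | hp
    · obtain ⟨j, hj, rfl⟩ := Finset.mem_image.mp hp
      rw [YoungDiagram.mem_cells]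
      have hj'' : j ≤ x.2 := Nat.lt_succ_iff.mp (Finset.mem_range.mp hj)
      exact μ.up_left_mem le_rfl hj'' ((YoungDiagram.mem_cells _).mp hx)
    · obtain ⟨i, hi, rfl⟩ := Finset.mem_image.mp hp
      rw [YoungDiagram.mem_cells]
      have hi'' : i ≤ y.1 := Nat.lt_succ_iff.mp (Finset.mem_range.mp hi)
      exact μ.up_left_mem hi'' le_rfl ((YoungDiagram.mem_cells _).mp hy)
  have hint : F1 ∩ F2 ⊆ {(x.1, y.2)} := by
    intro p hp
    obtain ⟨hp1, hp2⟩ := Finset.mem_inter.mp hp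
    obtain ⟨j, _, rfl⟩ := Finset.mem_image.mp hp1
    obtain ⟨i, _, hij⟩ := Finset.mem_image.mp hp2
    simp only [Prod.mk.injEq] at hij
    simp [← hij.2]
  have h1 : (F1 ∪ F2).card ≤ n := hμ ▸ Finset.card_le_card hsub
  have h2 : (F1 ∩ F2).card ≤ 1 := by
    simpa using Finset.card_le_card hint
  have h3 := Finset.card_union_add_card_inter F1 F2
  omega

/-- Key step for unicity of the tableau given contents. -/
lemma key_step {n : ℕ} {μ : YoungDiagram} (T S : StdYT n μ)
    (hct : ∀ k, ctOf T k = ctOf S k) (k : Fin n)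
    (IH : ∀ l : Fin n, l < k → T.label.symm l = S.label.symm l)
    (hrow : (T.label.symm k).1.1 < (S.label.symm k).1.1) : False := by
  set x := T.label.symm k with hxdef
  set y := S.label.symm k with hydef
  have hctk : (x.1.2 : ℤ) - x.1.1 = (y.1.2 : ℤ) - y.1.1 := hct k
  have hy1 : 1 ≤ y.1.1 := by omega
  have hcol : x.1.2 < y.1.2 := by omega
  have hy2 : 1 ≤ y.1.2 := by omega
  have hymem : y.1 ∈ μ := (YoungDiagram.mem_cells _).mp y.2
  have hymem' : (y.1.1, y.1.2) ∈ μ := by simpa using hymem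
  have hz : (y.1.1 - 1, y.1.2 - 1) ∈ μ.cells := by
    rw [YoungDiagram.mem_cells]
    exact μ.up_left_mem (Nat.sub_le _ _) (Nat.sub_le _ _) hymem'
  have hu : (y.1.1 - 1, y.1.2) ∈ μ.cells := by
    rw [YoungDiagram.mem_cells]
    exact μ.up_left_mem (Nat.sub_le _ _) le_rfl hymem'  
  have hSy : S.label y = k := by rw [hydef]; exact S.label.apply_symm_apply k
  have hlzu : S.label ⟨(y.1.1 - 1, y.1.2 - 1), hz⟩ < S.label ⟨(y.1.1 - 1, y.1.2), hu⟩ :=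
    S.row_lt ⟨(y.1.1 - 1, y.1.2 - 1), hz⟩ ⟨(y.1.1 - 1, y.1.2), hu⟩ rfl
      (show y.1.2 - 1 < y.1.2 by omega)
  have hluy : S.label ⟨(y.1.1 - 1, y.1.2), hu⟩ < S.label y :=
    S.col_lt ⟨(y.1.1 - 1, y.1.2), hu⟩ y rfl (show y.1.1 - 1 < y.1.1 by omega)
  set l := S.label ⟨(y.1.1 - 1, y.1.2 - 1), hz⟩ with hldef
  have hlk : l < k := by rw [← hSy]; exact hlzu.trans hluy
  have h1 : T.label.symm l = ⟨(y.1.1 - 1, y.1.2 - 1), hz⟩ := by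
    rw [IH l hlk, hldef, S.label.symm_apply_apply]
  have hTz : T.label ⟨(y.1.1 - 1, y.1.2 - 1), hz⟩ = l := by
    rw [← h1, T.label.apply_symm_apply]
  have hTx : T.label x = k := by rw [hxdef]; exact T.label.apply_symm_apply k
  have hne : x ≠ ⟨(y.1.1 - 1, y.1.2 - 1), hz⟩ := by
    intro hxy
    rw [hxy, hTz] at hTx
    exact absurd hTx (ne_of_lt hlk)
  have := T.label_lt_label x ⟨(y.1.1 - 1, y.1.2 - 1), hz⟩
    (show x.1.1 ≤ y.1.1 - 1 by omega) (show x.1.2 ≤ y.1.2 - 1 by omega) hne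
  rw [hTx, hTz] at this
  exact absurd (this.trans hlk) (lt_irrefl k)

/-- For `c = m/n` with `m, n` coprime positive integers and `μ` a
partition of `n`, the weight `wt(a,T)_i = a_i − ct_T(g_a(i))·m/n` determines the
pair `(a, T)`: if `wt(a,T) = wt(b,S)` then `a = b` and `T = S`. -/
theorem stmt_9 (m n : ℕ) (hm : 0 < m) (hn : 0 < n) (hco : Nat.Coprime m n)
    (μ : YoungDiagram) (hμ : μ.cells.card = n)
    (a b : Fin n → ℕ) (T S : StdYT n μ) (ga gb : Equiv.Perm (Fin n))
    (hga : IsMinSort a ga) (hgb : IsMinSort b gb)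
    (h : ∀ i : Fin n,
      (a i : ℚ) - (ctOf T (ga i) : ℚ) * ((m : ℚ) / n)
        = (b i : ℚ) - (ctOf S (gb i) : ℚ) * ((m : ℚ) / n)) :
    a = b ∧ T = S := by
  have hn0 : (n : ℚ) ≠ 0 := Nat.cast_ne_zero.mpr hn.ne'
  -- Step 1: for each i, a i = b i and the contents agree.
  have key : ∀ i, a i = b i ∧ ctOf T (ga i) = ctOf S (gb i) := by
    intro i
    have hq := h i
    set dT := ctOf T (ga i) with hdT
    set dS := ctOf S (gb i) with hdS
    have hZ : (n : ℤ) * ((a i : ℤ) - b i) = (dT - dS) * m := by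
      have hQ : ((n : ℤ) * ((a i : ℤ) - b i) : ℚ) = (((dT - dS) * m : ℤ) : ℚ) := by
        push_cast
        field_simp at hq
        linarith
      exact_mod_cast hQ
    have hcop : IsCoprime (n : ℤ) (m : ℤ) := by
      rw [Int.isCoprime_iff_gcd_eq_one, Int.gcd_natCast_natCast]
      exact hco.symm
    have hdvd : (n : ℤ) ∣ (dT - dS) := by
      refine hcop.dvd_of_dvd_mul_right ⟨(a i : ℤ) - b i, ?_⟩
      linarith
    -- bound the difference of contents
    have hb1 : dT - dS ≤ n - 1 := by
      have := content_bound hμ (T.label.symm (ga i)).2 (S.label.symm (gb i)).2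
      rw [hdT, hdS]
      unfold ctOf
      push_cast
      omega
    have hb2 : dS - dT ≤ n - 1 := by
      have := content_bound hμ (S.label.symm (gb i)).2 (T.label.symm (ga i)).2
      rw [hdT, hdS]
      unfold ctOf
      push_cast
      omega
    have hd0 : dT - dS = 0 := by
      by_contra hne
      have habs : (n : ℤ) ≤ |dT - dS| :=
        Int.le_of_dvd (abs_pos.mpr hne) ((dvd_abs _ _).mpr hdvd)
      rcases abs_cases (dT - dS) with ⟨he, _⟩ | ⟨he, _⟩ <;> omega
    constructor
    · have : ((a i : ℤ)) = b i := by
        have hn0' : (n : ℤ) ≠ 0 := Int.natCast_ne_zero.mpr hn.ne'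
        have := hZ
        rw [hd0, zero_mul, mul_eq_zero] at this
        rcases this with h' | h'
        · exact absurd h' hn0'
        · linarith
      exact_mod_cast this
    · omega
  have hab : a = b := funext fun i => (key i).1
  subst hab
  -- Step 2: ga = gb
  have hgg : ∀ i j, ga i < ga j ↔ gb i < gb j := fun i j => (hga i j).trans (hgb i j).symm
  have hgagb : gb = ga := by
    set f : Equiv.Perm (Fin n) := ga.symm.trans gb with hf
    have hmono : StrictMono f := by
      intro u v huv
      have : ga (ga.symm u) < ga (ga.symm v) := by simpa using huv
      exact (hgg _ _).mp this
    have hfid : ∀ i, f i = i := by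
      intro i
      have := Fin.coe_orderIso_apply (StrictMono.orderIsoOfSurjective ⇑f hmono f.surjective) i
      exact Fin.ext this
    apply Equiv.ext
    intro j
    have : f (ga j) = ga j := hfid (ga j)
    simpa [hf] using this
  subst hgagb
  refine ⟨rfl, ?_⟩
  -- Step 3: contents agree for every label
  have hct : ∀ k, ctOf T k = ctOf S k := by
    intro k
    have := (key (gb.symm k)).2
    simpa using this
  -- Step 4: the labels agree, by strong induction
  have hlab : ∀ N : ℕ, ∀ k : Fin n, (k : ℕ) < N → T.label.symm k = S.label.symm k := by
    intro N
    induction N with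
    | zero => intro k hk; omega
    | succ N ih =>
      intro k hk
      have IH : ∀ l : Fin n, l < k → T.label.symm l = S.label.symm l := by
        intro l hl
        exact ih l (by omega)
      by_contra hne
      have hctk : ctOf T k = ctOf S k := hct k
      unfold ctOf at hctk
      rcases lt_trichotomy (T.label.symm k).1.1 (S.label.symm k).1.1 with hr | hr | hr
      · exact key_step T S hct k IH hr
      · apply hne
        apply Subtype.ext
        apply Prod.ext hr
        omega
      · exact key_step S T (fun k => (hct k).symm) k (fun l hl => (IH l hl).symm) hr
  have hsymm : T.label.symm = S.label.symm := by
    apply Equiv.ext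
    intro k
    exact hlab n k k.isLt
  have hlabel : T.label = S.label := by
    rw [← T.label.symm_symm, hsymm, S.label.symm_symm]
  cases T; cases S
  simp_all
end

section
/- Define a linear order ≺ on the set P_k(n) of nonnegative integer vectors a ∈ ℤ_{≥0}^n with Σ a_i = k recursively as in the paper (via the decomposition into vectors with a_1 ≠ 0, ordered by transporting along π, followed by vectors with a_1 = 0, ordered by the order on P_k(n−1)). Then for a, b ∈ P_k(n): if a_i > a_{i+1} then a ≺ s_i·a; and if a_i > a_{i+1} and b ≺ a then s_i·b ≺ s_i·a (where s_i swaps coordinates i and i+1, and s_i·b is interpreted with the convention that the order properties hold as stated). -/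
/-- Rank of `(x,y)` in the explicit base ordering of `P_k(2)`:
`(ℓ,ℓ) ≺ (ℓ+1,ℓ−1) ≺ (ℓ−1,ℓ+1) ≺ ⋯ ≺ (2ℓ,0) ≺ (0,2ℓ)` for `k = 2ℓ`, and
`(ℓ+1,ℓ) ≺ (ℓ,ℓ+1) ≺ (ℓ+2,ℓ−1) ≺ ⋯ ≺ (2ℓ+1,0) ≺ (0,2ℓ+1)` for `k = 2ℓ+1`. -/
def rank2 (x y : ℕ) : ℕ := if y < x then x - y - 1 else y - x

/-- `π·(a_1,…,a_n) = (a_n + 1, a_1, …, a_{n−1})` on lists. -/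
def piL (l : List ℕ) : List ℕ := (l.getLast?.getD 0 + 1) :: l.dropLast

/-- The recursive linear order `≺` of the paper on `P_k(n)` (vectors of
nonnegative integers of fixed length `n` and sum `k`), as an inductively
generated relation: the base case is the explicit order for `n = 2`; for
`n ≥ 3`, `P_{k+1}(n)` is the concatenation of `π(P_k(n))` (order transported
along `π`) followed by `{a : a_1 = 0} ≅ P_{k+1}(n−1)`. -/
inductive Prec : List ℕ → List ℕ → Prop where
  | base (x y u v : ℕ) (hs : x + y = u + v) (hr : rank2 x y < rank2 u v) :
      Prec [x, y] [u, v]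
  | pi (a b : List ℕ) (h3 : 3 ≤ a.length) (h : Prec a b) : Prec (piL a) (piL b)
  | mixed (x : ℕ) (a b : List ℕ) (hl : a.length = b.length) (h2 : 2 ≤ a.length)
      (hsum : x + 1 + a.sum = b.sum) : Prec ((x + 1) :: a) (0 :: b)
  | zero (a b : List ℕ) (h2 : 2 ≤ a.length) (h : Prec a b) : Prec (0 :: a) (0 :: b)

/-- Swap the entries in positions `i` and `i+1` (0-based) of a list. -/
def swapL (l : List ℕ) (i : ℕ) : List ℕ :=
  (l.set i (l.getD (i + 1) 0)).set (i + 1) (l.getD i 0)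

lemma rank2_succ (x y : ℕ) : rank2 (y+1) x = rank2 x y := by
  simp only [rank2]; split_ifs <;> omega

lemma swap0 (x y : ℕ) (t : List ℕ) : swapL (x::y::t) 0 = y::x::t := by
  simp [swapL, List.getD]

lemma swap_succ (h : ℕ) (t : List ℕ) (i : ℕ) : swapL (h::t) (i+1) = h :: swapL t i := by
  simp [swapL, List.getD]

lemma swapL_length (l : List ℕ) (i : ℕ) : (swapL l i).length = l.length := by
  simp [swapL]

lemma swapL_sum (l : List ℕ) (i : ℕ) (h : i+1 < l.length) : (swapL l i).sum = l.sum := by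
  induction i generalizing l with
  | zero =>
    match l with
    | x :: y :: t => rw [swap0]; simp; omega
  | succ j ih =>
    match l with
    | x :: t =>
      rw [swap_succ]
      simp at h ⊢
      rw [ih t (by omega)]

lemma swapL_append (l s : List ℕ) (i : ℕ) (h : i + 1 < l.length) :
    swapL (l ++ s) i = swapL l i ++ s := by
  induction i generalizing l with
  | zero =>
    match l with
    | x :: y :: t => simp only [List.cons_append, swap0]
  | succ j ih =>
    match l with
    | x :: t =>
      simp only [List.cons_append, swap_succ]
      rw [ih t (by simpa using h)]

lemma swapL_last_two (m : List ℕ) (u v : ℕ) : swapL (m ++ [u, v]) m.length = m ++ [v, u] := by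
  induction m with
  | nil => simpa using swap0 u v []
  | cons x t ih => simpa [swap_succ] using ih

lemma getD_last_two₁ (m : List ℕ) (u v : ℕ) : (m ++ [u,v]).getD m.length 0 = u := by
  induction m with
  | nil => rfl
  | cons x t ih => simpa [List.getD] using ih

lemma getD_last_two₂ (m : List ℕ) (u v : ℕ) : (m ++ [u,v]).getD (m.length+1) 0 = v := by
  induction m with
  | nil => rfl
  | cons x t ih => simpa [List.getD] using ih

lemma getD_append_left (l s : List ℕ) (i : ℕ) (h : i < l.length) :
    (l ++ s).getD i 0 = l.getD i 0 := by
  rw [List.getD_append _ _ _ _ h]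

lemma dropLast_append_getLast (x : List ℕ) (h : x ≠ []) :
    x.dropLast ++ [x.getLast?.getD 0] = x := by
  rcases (List.eq_nil_or_concat x) with h' | ⟨L, b, rfl⟩
  · exact absurd h' h
  · simp

lemma sum_dropLast (x : List ℕ) (h : x ≠ []) :
    x.dropLast.sum + x.getLast?.getD 0 = x.sum := by
  conv_rhs => rw [← dropLast_append_getLast x h]
  simp

lemma prec_len_sum {b a : List ℕ} (h : Prec b a) : b.length = a.length ∧ b.sum = a.sum := by
  induction h with
  | base x y u v hs hr => simp; omega
  | pi a b h3 h ih =>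
    have ha : a ≠ [] := by intro h'; simp [h'] at h3
    have hb : b ≠ [] := by intro h'; have h1 := ih.1; rw [h'] at h1; simp at h1; simp [h1] at h3
    constructor
    · simp only [piL, List.length_cons, List.length_dropLast]
      omega
    · simp only [piL, List.sum_cons]
      have := sum_dropLast a ha
      have := sum_dropLast b hb
      omega
  | mixed x a b hl h2 hsum => simp [hl]; omega
  | zero a b h2 h ih => simp [ih.1, ih.2]

lemma prec_head_zero {s : List ℕ} {a : List ℕ} (h : Prec (0::s) a) : ∃ t, a = 0 :: t := by
  cases h with
  | base x y u v hs hr =>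
    refine ⟨[v], ?_⟩
    simp only [rank2] at hr
    split_ifs at hr <;> (simp; omega)
  | zero a b h2 h => exact ⟨b, rfl⟩

lemma prec_zero_inv {s t : List ℕ} (h : Prec (0::s) (0::t)) : Prec s t := by
  cases h with
  | base x y u v hs hr =>
    exfalso
    simp only [rank2] at hr
    split_ifs at hr <;> omega
  | zero a b h2 h => exact h

lemma prec_base_inv {x y u v : ℕ} (h : Prec [x,y] [u,v]) : rank2 x y < rank2 u v := by
  generalize hb : [x,y] = l1 at h
  generalize ha : [u,v] = l2 at h
  cases h with
  | base x' y' u' v' hs hr =>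
    obtain ⟨rfl, rfl⟩ : x' = x ∧ y' = y := by
      have := hb; simp at this; tauto
    obtain ⟨rfl, rfl⟩ : u' = u ∧ v' = v := by
      have := ha; simp at this; tauto
    exact hr
  | pi a b h3 h =>
    exfalso
    have := congrArg List.length hb
    simp [piL] at this
    omega
  | mixed x' a b hl h2 hsum =>
    exfalso
    have := congrArg List.length hb
    simp at this
    omega
  | zero a b h2 h =>
    exfalso
    have := congrArg List.length hb
    simp at this
    omega

lemma prec_pi_inv {x y : ℕ} {s t : List ℕ} (h : Prec ((x+1)::s) ((y+1)::t))
    (hs1 : 1 ≤ s.length) : Prec (s ++ [x]) (t ++ [y]) := by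
  generalize hb : (x+1)::s = l1 at h
  generalize ha : (y+1)::t = l2 at h
  cases h with
  | base x' y' u v hs hr =>
    obtain ⟨hx, hsy⟩ : x' = x+1 ∧ s = [y'] := by
      have := hb; simp at this; tauto
    obtain ⟨hu, htv⟩ : u = y+1 ∧ t = [v] := by
      have := ha; simp at this; tauto
    subst hx; subst hu; subst hsy; subst htv
    simp only [List.cons_append, List.nil_append]
    refine Prec.base y' x v y (by omega) ?_
    rw [rank2_succ] at hr
    rw [rank2_succ] at hr
    exact hr
  | pi a b h3 h =>
    have hlen := (prec_len_sum h).1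
    have ha' : a ≠ [] := by intro h'; simp [h'] at h3
    have hb' : b ≠ [] := by intro h'; rw [h'] at hlen; simp at hlen; simp [hlen] at h3
    have e1 : a = s ++ [x] := by
      have h1 : a.dropLast = s := by
        have := hb; simp [piL] at this; tauto
      have h2 : a.getLast?.getD 0 = x := by
        have := hb; simp [piL] at this; tauto
      rw [← h1, ← h2]; exact (dropLast_append_getLast a ha').symm
    have e2 : b = t ++ [y] := by
      have h1 : b.dropLast = t := by
        have := ha; simp [piL] at this; tauto
      have h2 : b.getLast?.getD 0 = y := by
        have := ha; simp [piL] at this; tauto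
      rw [← h1, ← h2]; exact (dropLast_append_getLast b hb').symm
    rw [← e1, ← e2]; exact h
  | mixed x' a b hl h2 hsum =>
    exfalso
    have := ha; simp at this
  | zero a b h2 h =>
    exfalso
    have := hb; simp at this

lemma piL_concat (l : List ℕ) (q : ℕ) : piL (l ++ [q]) = (q+1) :: l := by
  simp [piL]

lemma prec_pi_step {s t : List ℕ} {x y : ℕ} (h : Prec (s ++ [x]) (t ++ [y]))
    (hs1 : 1 ≤ s.length) : Prec ((x+1)::s) ((y+1)::t) := by
  rcases Nat.lt_or_ge s.length 2 with hlt | hge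
  · have hs : s.length = 1 := by omega
    obtain ⟨a, rfl⟩ : ∃ a, s = [a] := by
      match s, hs with | [a], _ => exact ⟨a, rfl⟩
    have hlen := (prec_len_sum h).1
    have hsum := (prec_len_sum h).2
    have ht : t.length = 1 := by simp at hlen; omega
    obtain ⟨b, rfl⟩ : ∃ b, t = [b] := by
      match t, ht with | [b], _ => exact ⟨b, rfl⟩
    simp only [List.cons_append, List.nil_append] at h hsum
    have hr := prec_base_inv h
    refine Prec.base (x+1) a (y+1) b (by simp at hsum ⊢; omega) ?_
    rw [rank2_succ, rank2_succ]
    exact hr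
  · have := Prec.pi (s ++ [x]) (t ++ [y]) (by simp <;> omega) h
    rwa [piL_concat, piL_concat] at this

lemma main : ∀ N : ℕ,
    (∀ (a : List ℕ) (i : ℕ), a.sum + a.length ≤ N → 2 ≤ a.length → i + 1 < a.length →
      a.getD (i + 1) 0 < a.getD i 0 → Prec a (swapL a i)) ∧
    (∀ (a b : List ℕ) (i : ℕ), a.sum + a.length ≤ N → 2 ≤ a.length → i + 1 < a.length →
      a.getD (i + 1) 0 < a.getD i 0 → b.length = a.length → b.sum = a.sum →
      Prec b a → Prec (swapL b i) (swapL a i)) := by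
  intro N
  induction N using Nat.strong_induction_on with
  | _ N IH =>
  constructor
  · -- part (3)
    intro a i hN h2 hi hlt
    rcases i with _ | j
    · rcases a with _ | ⟨a0, _ | ⟨a1, r⟩⟩
      · simp at h2
      · simp at h2
      · simp only [List.getD_cons_succ, List.getD_cons_zero] at hlt
        rw [swap0]
        rcases r with _ | ⟨r0, rs⟩
        · exact Prec.base a0 a1 a1 a0 (by omega)
            (by simp only [rank2]; split_ifs <;> omega)
        · rcases Nat.eq_zero_or_pos a1 with rfl | ha1
          · obtain ⟨d, rfl⟩ : ∃ d, a0 = d+1 := ⟨a0-1, by omega⟩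
            exact Prec.mixed d (0::r0::rs) ((d+1)::r0::rs) (by simp) (by simp)
              (by simp <;> omega)
          · obtain ⟨e, rfl⟩ : ∃ e, a1 = e+1 := ⟨a1-1, by omega⟩
            obtain ⟨q, rfl⟩ : ∃ q, a0 = q+1 := ⟨a0-1, by omega⟩
            set m : List ℕ := r0 :: rs with hmdef
            have step1 : Prec (m ++ [q,e]) (m ++ [e,q]) := by
              have hc := (IH ((m ++ [q,e]).sum + (m ++ [q,e]).length)
                  (by simp [hmdef] at hN ⊢; omega)).1 (m ++ [q,e]) m.length le_rfl
                  (by simp) (by simp)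
                  (by rw [getD_last_two₁, getD_last_two₂]; omega)
              rwa [swapL_last_two] at hc
            have step2 : Prec ((e+1)::(m++[q])) ((q+1)::(m++[e])) := by
              apply prec_pi_step _ (by simp)
              rw [List.append_assoc, List.append_assoc]
              exact step1
            exact prec_pi_step (s := (e+1)::m) (t := (q+1)::m) (x := q) (y := e)
              step2 (by simp)
    · rcases a with _ | ⟨a0, t⟩
      · simp at h2
      · simp only [List.getD_cons_succ] at hlt
        have hi' : j + 1 < t.length := by simp at hi; omega
        rw [swap_succ]
        rcases Nat.eq_zero_or_pos a0 with rfl | ha0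
        · exact Prec.zero t (swapL t j) (by omega)
            ((IH (t.sum + t.length) (by simp at hN ⊢; omega)).1 t j le_rfl
              (by omega) hi' hlt)
        · obtain ⟨d, rfl⟩ : ∃ d, a0 = d+1 := ⟨a0-1, by omega⟩
          have hstep := (IH ((t++[d]).sum + (t++[d]).length)
              (by simp at hN ⊢; omega)).1 (t++[d]) j le_rfl
              (by simp <;> omega) (by simp <;> omega)
              (by rw [getD_append_left _ _ _ (by omega), getD_append_left _ _ _ (by omega)]
                  exact hlt)
          rw [swapL_append _ _ _ hi'] at hstep
          exact prec_pi_step hstep (by omega)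
  · -- part (4)
    intro a b i hN h2 hi hlt hlen hsum hba
    rcases i with _ | j
    · rcases a with _ | ⟨a0, _ | ⟨a1, ra⟩⟩
      · simp at h2
      · simp at h2
      rcases b with _ | ⟨b0, _ | ⟨b1, rb⟩⟩
      · simp at hlen
      · simp at hlen
      simp only [List.getD_cons_succ, List.getD_cons_zero] at hlt
      rw [swap0, swap0]
      rcases Nat.eq_zero_or_pos b0 with rfl | hb0
      · exfalso
        obtain ⟨t, ht⟩ := prec_head_zero hba
        injection ht with h1 _
        omega
      obtain ⟨c, rfl⟩ : ∃ c, b0 = c+1 := ⟨b0-1, by omega⟩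
      obtain ⟨d, rfl⟩ : ∃ d, a0 = d+1 := ⟨a0-1, by omega⟩
      rcases ra with _ | ⟨r0, rs⟩
      · -- n = 2
        obtain rfl : rb = [] := by simpa using hlen
        have hr := prec_base_inv hba
        simp only [List.sum_cons, List.sum_nil] at hsum
        refine Prec.base b1 (c+1) a1 (d+1) (by omega) ?_
        simp only [rank2] at hr ⊢
        split_ifs at hr ⊢ <;> omega
      · rcases rb with _ | ⟨s0, ss⟩
        · simp at hlen
        set ma : List ℕ := r0 :: rs with hmadef
        set mb : List ℕ := s0 :: ss with hmbdef
        have pInv : Prec (b1::(mb++[c])) (a1::(ma++[d])) := prec_pi_inv hba (by simp)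
        rcases Nat.eq_zero_or_pos a1 with rfl | ha1
        · rcases Nat.eq_zero_or_pos b1 with rfl | hb1
          · have h1 : Prec (mb++[c]) (ma++[d]) := prec_zero_inv pInv
            exact Prec.zero _ _ (by simp [hmbdef]) (prec_pi_step h1 (by simp [hmbdef]))
          · obtain ⟨e, rfl⟩ : ∃ e, b1 = e+1 := ⟨b1-1, by omega⟩
            refine Prec.mixed e ((c+1)::mb) ((d+1)::ma) (by simp at hlen ⊢; omega)
              (by simp [hmbdef]) ?_
            simp at hsum ⊢
            omega
        · obtain ⟨f, rfl⟩ : ∃ f, a1 = f+1 := ⟨a1-1, by omega⟩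
          rcases Nat.eq_zero_or_pos b1 with rfl | hb1
          · exfalso
            obtain ⟨t, ht⟩ := prec_head_zero pInv
            injection ht with h1 _
            omega
          · obtain ⟨e, rfl⟩ : ∃ e, b1 = e+1 := ⟨b1-1, by omega⟩
            have pInv2 := prec_pi_inv pInv (by simp)
            rw [List.append_assoc, List.append_assoc] at pInv2
            have hmb : mb.length = ma.length := by simp at hlen; omega
            have hIH := (IH ((ma++[d,f]).sum + (ma++[d,f]).length)
                (by simp [hmadef] at hN ⊢; omega)).2
                (ma++[d,f]) (mb++[c,e]) ma.length le_rfl (by simp) (by simp)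
                (by rw [getD_last_two₁, getD_last_two₂]; omega)
                (by simp [hmb]) (by simp at hsum ⊢; omega) pInv2
            rw [swapL_last_two, ← hmb, swapL_last_two] at hIH
            have s2 : Prec ((c+1)::(mb++[e])) ((d+1)::(ma++[f])) := by
              apply prec_pi_step _ (by simp)
              rw [List.append_assoc, List.append_assoc]
              exact hIH
            exact prec_pi_step (s := (c+1)::mb) (x := e) (t := (d+1)::ma) (y := f)
              s2 (by simp)
    · rcases a with _ | ⟨a0, ta⟩
      · simp at h2
      rcases b with _ | ⟨b0, tb⟩
      · simp at hlen
      simp only [List.getD_cons_succ] at hlt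
      have hi' : j + 1 < ta.length := by simp at hi; omega
      have hlen' : tb.length = ta.length := by simp at hlen; omega
      rw [swap_succ, swap_succ]
      rcases Nat.eq_zero_or_pos a0 with rfl | ha0
      · rcases Nat.eq_zero_or_pos b0 with rfl | hb0
        · have h1 := prec_zero_inv hba
          exact Prec.zero _ _ (by rw [swapL_length]; omega)
            ((IH (ta.sum + ta.length) (by simp at hN ⊢; omega)).2 ta tb j le_rfl
              (by omega) hi' hlt hlen' (by simp at hsum; omega) h1)
        · obtain ⟨c, rfl⟩ : ∃ c, b0 = c+1 := ⟨b0-1, by omega⟩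
          refine Prec.mixed c (swapL tb j) (swapL ta j)
            (by rw [swapL_length, swapL_length]; exact hlen')
            (by rw [swapL_length]; omega) ?_
          rw [swapL_sum _ _ (by omega : j+1 < tb.length), swapL_sum _ _ hi']
          simp at hsum
          omega
      · rcases Nat.eq_zero_or_pos b0 with rfl | hb0
        · exfalso
          obtain ⟨t, ht⟩ := prec_head_zero hba
          injection ht with h1 _
          omega
        · obtain ⟨c, rfl⟩ : ∃ c, b0 = c+1 := ⟨b0-1, by omega⟩
          obtain ⟨d, rfl⟩ : ∃ d, a0 = d+1 := ⟨a0-1, by omega⟩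
          have pInv := prec_pi_inv hba (by omega)
          have hIH := (IH ((ta++[d]).sum + (ta++[d]).length)
              (by simp at hN ⊢; omega)).2
              (ta++[d]) (tb++[c]) j le_rfl (by simp <;> omega) (by simp <;> omega)
              (by rw [getD_append_left _ _ _ (by omega), getD_append_left _ _ _ (by omega)]
                  exact hlt)
              (by simp <;> omega) (by simp at hsum ⊢; omega) pInv
          rw [swapL_append _ _ _ hi', swapL_append _ _ _ (by omega : j+1 < tb.length)] at hIH
          exact prec_pi_step hIH (by rw [swapL_length]; omega)

/-- properties (3) and (4) of the recursive order: if
`a_i > a_{i+1}` then `a ≺ s_i·a`; and if moreover `b ≺ a` (with `b` of the same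
length and sum) then `s_i·b ≺ s_i·a`. -/
theorem stmt_11 :
    (∀ (a : List ℕ) (i : ℕ), 2 ≤ a.length → i + 1 < a.length →
      a.getD (i + 1) 0 < a.getD i 0 → Prec a (swapL a i)) ∧
    (∀ (a b : List ℕ) (i : ℕ), 2 ≤ a.length → i + 1 < a.length →
      a.getD (i + 1) 0 < a.getD i 0 → b.length = a.length → b.sum = a.sum →
      Prec b a → Prec (swapL b i) (swapL a i)) := by
  constructor
  · intro a i h2 hi hlt
    exact (main (a.sum + a.length)).1 a i le_rfl h2 hi hlt
  · intro a b i h2 hi hlt hlen hsum hba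
    exact (main (a.sum + a.length)).2 a b i le_rfl h2 hi hlt hlen hsum hba
end

section
/- Let m, n be coprime positive integers. Define S ⊆ ℤ_{≥0}^n as the set of vectors a such that either max_{i,j}(a_i − a_j) > m, or max_{i,j}(a_i − a_j) = m and there exist indices j < i with a_i − a_j = m. Then S is closed under the map π·(a_1,...,a_n) = (a_n+1, a_1,...,a_{n−1}); it is closed under π^{-1} whenever a_1 ≠ 0; and if a ∈ S and swapping coordinates i, i+1 yields s_i·a ∉ S, then a_{i+1} = a_i + m, a_i < a_j ≤ a_{i+1} for all j < i, and a_i ≤ a_j < a_{i+1} for all j > i+1. -/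
/-- Membership in the set `S` indexing the radical: either some difference
`a_i − a_j` exceeds `m`, or some difference equals `m` with the larger entry to
the right of the smaller (`j < i` and `a_i − a_j = m`). -/
def memS (n m : ℕ) (a : Fin n → ℕ) : Prop :=
  (∃ i j : Fin n, a j + m < a i) ∨ (∃ i j : Fin n, j < i ∧ a i = a j + m)

/-- `π·(a_1,…,a_n) = (a_n + 1, a_1, …, a_{n−1})`. -/
def piA (n : ℕ) [NeZero n] (a : Fin n → ℕ) : Fin n → ℕ :=
  fun i => a (i - 1) + if i = 0 then 1 else 0

/-- `π⁻¹·(a_1,…,a_n) = (a_2, …, a_n, a_1 − 1)` (defined when `a_1 ≥ 1`). -/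
def piInvA (n : ℕ) [NeZero n] (a : Fin n → ℕ) : Fin n → ℕ :=
  fun i => a (i + 1) - if i + 1 = 0 then 1 else 0

lemma add_one_eq_zero_iff' {n : ℕ} (k : Fin (n+1)) : k + 1 = 0 ↔ k = Fin.last n := by
  constructor
  · intro h
    by_contra hk
    have hv := Fin.val_add_one k
    rw [if_neg hk, h] at hv
    simp at hv
  · rintro rfl
    exact Fin.last_add_one n

/-- For coprime positive `m, n`: the set `S` is closed under `π`;
closed under `π⁻¹` whenever `a_1 ≠ 0`; and if `a ∈ S` but swapping adjacent
coordinates `i, i+1` leaves `S`, then `a_{i+1} = a_i + m`, `a_i < a_k ≤ a_{i+1}`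
for all `k < i`, and `a_i ≤ a_k < a_{i+1}` for all `k > i+1`. -/
theorem stmt_13 (m n : ℕ) [NeZero n] (hm : 0 < m) (hn : 0 < n)
    (hco : Nat.Coprime m n) :
    (∀ a : Fin n → ℕ, memS n m a → memS n m (piA n a)) ∧
    (∀ a : Fin n → ℕ, memS n m a → a 0 ≠ 0 → memS n m (piInvA n a)) ∧
    (∀ (a : Fin n → ℕ) (i j : Fin n), (j : ℕ) = (i : ℕ) + 1 →
      memS n m a → ¬ memS n m (a ∘ Equiv.swap i j) →
      a j = a i + m ∧
      (∀ k : Fin n, k < i → a i < a k ∧ a k ≤ a j) ∧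
      (∀ k : Fin n, j < k → a i ≤ a k ∧ a k < a j)) := by
  obtain ⟨n, rfl⟩ : ∃ n', n = n' + 1 := ⟨n - 1, by omega⟩
  refine ⟨?_, ?_, ?_⟩
  · -- closure under π
    intro a ha
    have key : ∀ k : Fin (n+1),
        piA (n+1) a (k+1) = a k + if k = Fin.last n then 1 else 0 := by
      intro k
      show a (k + 1 - 1) + _ = _
      rw [add_sub_cancel_right]
      congr 1
      by_cases h : k = Fin.last n
      · rw [if_pos ((add_one_eq_zero_iff' k).mpr h), if_pos h]
      · rw [if_neg (fun hh => h ((add_one_eq_zero_iff' k).mp hh)), if_neg h]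
    rcases ha with ⟨i, j, hij⟩ | ⟨i, j, hji, hij⟩
    · -- a j + m < a i
      have hne : i ≠ j := by rintro rfl; omega
      by_cases hj : j = Fin.last n
      · have hi : i ≠ Fin.last n := by
          rintro rfl; exact hne hj.symm
        have h1 : piA (n+1) a (j+1) = a j + 1 := by rw [key, if_pos hj]
        have h2 : piA (n+1) a (i+1) = a i := by rw [key, if_neg hi]; omega
        rcases Nat.lt_or_ge (a j + 1 + m) (a i) with h | h
        · exact Or.inl ⟨i+1, j+1, by omega⟩
        · refine Or.inr ⟨i+1, j+1, ?_, by omega⟩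
          rw [Fin.lt_def]
          have hv1 : ((j+1 : Fin (n+1)) : ℕ) = 0 := by
            rw [(add_one_eq_zero_iff' j).mpr hj]; rfl
          have hv2 : ((i+1 : Fin (n+1)) : ℕ) = i.val + 1 := by
            rw [Fin.val_add_one, if_neg hi]
          omega
      · -- j ≠ last : strict inequality survives
        left
        refine ⟨i+1, j+1, ?_⟩
        rw [key i, key j, if_neg hj]
        split <;> omega
    · -- j < i, a i = a j + m
      have hjv : j.val < i.val := hji
      have hj : j ≠ Fin.last n := by
        intro h
        have := i.isLt
        rw [h] at hjv
        simp [Fin.last] at hjv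
        omega
      by_cases hi : i = Fin.last n
      · left
        refine ⟨i+1, j+1, ?_⟩
        rw [key i, key j, if_pos hi, if_neg hj]
        omega
      · right
        refine ⟨i+1, j+1, ?_, ?_⟩
        · rw [Fin.lt_def, Fin.val_add_one, Fin.val_add_one, if_neg hi, if_neg hj]
          omega
        · rw [key i, key j, if_neg hi, if_neg hj]
          omega
  · -- closure under π⁻¹
    intro a ha ha0
    have key : ∀ k : Fin (n+1),
        piInvA (n+1) a (k-1) = a k - if k = 0 then 1 else 0 := by
      intro k
      show a (k - 1 + 1) - _ = _
      rw [sub_add_cancel]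
    rcases ha with ⟨i, j, hij⟩ | ⟨i, j, hji, hij⟩
    · by_cases hi : i = (0 : Fin (n+1))
      · by_cases hj : j = (0 : Fin (n+1))
        · rw [hi, hj] at hij; omega
        · have ha0' : 1 ≤ a 0 := by omega
          have h1 : piInvA (n+1) a (i-1) = a 0 - 1 := by rw [key, if_pos hi, hi]
          have h2 : piInvA (n+1) a (j-1) = a j := by rw [key, if_neg hj]; omega
          rw [hi] at hij
          rcases Nat.lt_or_ge (a j + m) (a 0 - 1) with h | h
          · exact Or.inl ⟨i-1, j-1, by omega⟩
          · refine Or.inr ⟨i-1, j-1, ?_, by omega⟩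
            rw [Fin.lt_def, Fin.coe_sub_one, Fin.coe_sub_one, if_pos hi, if_neg hj]
            have : j.val ≠ 0 := fun h => hj (Fin.ext h)
            have := j.isLt
            omega
      · left
        refine ⟨i-1, j-1, ?_⟩
        have h1 : piInvA (n+1) a (i-1) = a i := by rw [key, if_neg hi]; omega
        have h2 : piInvA (n+1) a (j-1) ≤ a j := by rw [key]; split <;> omega
        omega
    · -- j < i, a i = a j + m
      have hjv : j.val < i.val := hji
      have hi : i ≠ (0 : Fin (n+1)) := by
        intro h; rw [h] at hjv; simp at hjv
      have h1 : piInvA (n+1) a (i-1) = a i := by rw [key, if_neg hi]; omega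
      by_cases hj : j = (0 : Fin (n+1))
      · left
        refine ⟨i-1, j-1, ?_⟩
        have ha0' : 1 ≤ a 0 := by omega
        have h2 : piInvA (n+1) a (j-1) = a 0 - 1 := by rw [key, if_pos hj, hj]
        rw [hj] at hij
        omega
      · right
        refine ⟨i-1, j-1, ?_, ?_⟩
        · rw [Fin.lt_def, Fin.coe_sub_one, Fin.coe_sub_one, if_neg hi, if_neg hj]
          have : j.val ≠ 0 := fun h => hj (Fin.ext h)
          omega
        · have h2 : piInvA (n+1) a (j-1) = a j := by rw [key, if_neg hj]; omega
          omega
  · -- the swap statement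
    intro a i j hji ha hb
    unfold memS at hb
    push_neg at hb
    obtain ⟨hb1, hb2⟩ := hb
    have hbv : ∀ p : Fin (n+1), (a ∘ Equiv.swap i j) (Equiv.swap i j p) = a p := by
      intro p; simp
    have hall : ∀ p q : Fin (n+1), a p ≤ a q + m := by
      intro p q
      have h := hb1 (Equiv.swap i j p) (Equiv.swap i j q)
      rw [hbv, hbv] at h
      omega
    obtain ⟨p, q, hqp, hpq⟩ :=
      ha.resolve_left (by push_neg; intro p q; have := hall p q; omega)
    have hswap : ¬ (Equiv.swap i j q < Equiv.swap i j p) := by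
      intro h
      have h2 := hb2 (Equiv.swap i j p) (Equiv.swap i j q) h
      rw [hbv, hbv] at h2
      exact h2 hpq
    have hqpv : q.val < p.val := hqp
    have hijlt : i < j := by rw [Fin.lt_def]; omega
    -- identify q = i, p = j
    have hkey : q = i ∧ p = j := by
      rcases eq_or_ne q i with hq1 | hq1
      · rcases eq_or_ne p j with hp1 | hp1
        · exact ⟨hq1, hp1⟩
        · exfalso
          have hpi : p ≠ i := by
            intro h; rw [hq1, ← h] at hqpv; omega
          rw [hq1, Equiv.swap_apply_left, Equiv.swap_apply_of_ne_of_ne hpi hp1] at hswap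
          rw [Fin.lt_def] at hswap
          have : p.val ≠ j.val := fun h => hp1 (Fin.ext h)
          rw [hq1] at hqpv
          omega
      · exfalso
        have hq1v : q.val ≠ i.val := fun h => hq1 (Fin.ext h)
        rcases eq_or_ne q j with hq2 | hq2
        · have hpi : p ≠ i := by
            intro h; rw [hq2, h] at hqpv; omega
          have hpj : p ≠ j := by
            intro h; rw [hq2, h] at hqpv; omega
          rw [hq2, Equiv.swap_apply_right, Equiv.swap_apply_of_ne_of_ne hpi hpj] at hswap
          rw [Fin.lt_def] at hswap
          rw [hq2] at hqpv
          omega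
        · have hq2v : q.val ≠ j.val := fun h => hq2 (Fin.ext h)
          rcases eq_or_ne p i with hp1 | hp1
          · rw [hp1, Equiv.swap_apply_left,
              Equiv.swap_apply_of_ne_of_ne hq1 hq2] at hswap
            rw [Fin.lt_def] at hswap
            rw [hp1] at hqpv
            omega
          · rcases eq_or_ne p j with hp2 | hp2
            · rw [hp2, Equiv.swap_apply_right,
                Equiv.swap_apply_of_ne_of_ne hq1 hq2] at hswap
              rw [Fin.lt_def] at hswap
              rw [hp2] at hqpv
              omega
            · rw [Equiv.swap_apply_of_ne_of_ne hp1 hp2,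
                Equiv.swap_apply_of_ne_of_ne hq1 hq2] at hswap
              exact hswap hqp
    obtain ⟨rfl, rfl⟩ := hkey
    refine ⟨hpq, ?_, ?_⟩
    · intro k hk
      have hkv : k.val < q.val := hk
      have hki : k ≠ q := ne_of_lt hk
      have hkj : k ≠ p := ne_of_lt (lt_trans hk hijlt)
      have h1 := hall p k
      have h2 := hall k q
      have h3 := hb2 q k hk
      have hbq : (a ∘ Equiv.swap q p) q = a p := by simp
      have hbk : (a ∘ Equiv.swap q p) k = a k := by
        simp [Equiv.swap_apply_of_ne_of_ne hki hkj]
      rw [hbq, hbk] at h3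
      omega
    · intro k hk
      have hkv : p.val < k.val := hk
      have hki : k ≠ q := (ne_of_lt (lt_trans hijlt hk)).symm
      have hkj : k ≠ p := (ne_of_lt hk).symm
      have h1 := hall p k
      have h2 := hall k q
      have h3 := hb2 k p hk
      have hbj : (a ∘ Equiv.swap q p) p = a q := by simp
      have hbk : (a ∘ Equiv.swap q p) k = a k := by
        simp [Equiv.swap_apply_of_ne_of_ne hki hkj]
      rw [hbj, hbk] at h3
      omega
end

section
/- Let m, n be coprime positive integers. Let T = {a ∈ ℤ_{≥0}^n : a_i − a_j ≤ m for all i,j, and whenever a_i − a_j = m one has i < j}. Then a vector c = (c_1,...,c_n) ∈ ℤ_{≥0}^n (extended periodically by c_{i+n} = c_i + 1) satisfies max_{i=t}^{t+n−1}(c_i) − min_{i=t}^{t+n−1}(c_i) ≤ m for all t > 0 if and only if max_{i=1}^n(c_i) − min_{i=1}^n(c_i) ≤ m and whenever c_j + m = c_i (with 1 ≤ i,j ≤ n) one has j < i. -/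
/-!
Two indices `i, j ≥ 1` lie in a common window of length `n` exactly when `|i - j| < n`, so the
window condition bounds `c i - c j` for all such pairs. Shifting by a multiple of `n` changes
both values by the same amount, so one may assume `1 ≤ j ≤ n`; then `i` lies in the first window,
or in a neighbouring one, where `c i` differs from a value on the first window by `∓1`. From the
window to its right the bound `m` survives only because `c j + m = c i` with `1 ≤ i, j ≤ n` forces
`j < i`; conversely, if `i ≤ j` and `c j + m = c i`, the pair `(i + n, j)` violates the bound.
-/

section QuasiPeriodic

variable {c : ℤ → ℤ} {n m : ℤ}

theorem apply_add_mul_eq (hc : ∀ i, c (i + n) = c i + 1) (i k : ℤ) :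
    c (i + k * n) = c i + k := by
  induction k using Int.induction_on with
  | zero => simp
  | succ k ih => rw [add_one_mul, ← add_assoc, hc, ih, add_assoc]
  | pred k ih =>
    have h := hc (i + (-k - 1) * n)
    rw [add_assoc, ← add_one_mul, sub_add_cancel, ih] at h
    omega

theorem exists_eq_add_mul_of_pos (hn : 0 < n) (j : ℤ) :
    ∃ b k, 1 ≤ b ∧ b ≤ n ∧ j = b + k * n :=
  ⟨(j - 1) % n + 1, (j - 1) / n, by
    have := Int.emod_nonneg (j - 1) hn.ne'
    have := Int.emod_lt_of_pos (j - 1) hn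
    have := Int.emod_add_mul_ediv (j - 1) n
    refine ⟨by omega, by omega, by linarith [mul_comm n ((j - 1) / n)]⟩⟩

theorem forall_window_sub_le_iff :
    (∀ t, 1 ≤ t → ∀ i j, t ≤ i → i < t + n → t ≤ j → j < t + n → c i - c j ≤ m) ↔
      ∀ i j, 1 ≤ i → 1 ≤ j → i < j + n → j < i + n → c i - c j ≤ m := by
  constructor
  · intro h i j hi hj hij hji
    exact h (min i j) (le_min hi hj) i j (min_le_left _ _) (by omega) (min_le_right _ _)
      (by omega)
  · intro h t ht i j hti hit htj hjt
    exact h i j (by omega) (by omega) (by omega) (by omega)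

variable (hc : ∀ i, c (i + n) = c i + 1)
  (hbound : ∀ i j, 1 ≤ i → i ≤ n → 1 ≤ j → j ≤ n → c i - c j ≤ m)
  (hstrict : ∀ i j, 1 ≤ i → i ≤ n → 1 ≤ j → j ≤ n → c j + m = c i → j < i)
include hc hbound hstrict

theorem sub_le_of_lt_add_of_mem_Icc {i j : ℤ} (hj : 1 ≤ j) (hjn : j ≤ n)
    (hij : i < j + n) (hji : j < i + n) : c i - c j ≤ m := by
  rcases le_or_gt i 0 with hi | hi
  · have := hbound (i + n) j (by omega) (by omega) hj hjn
    have := hc i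
    omega
  rcases le_or_gt i n with hin | hin
  · exact hbound i j hi hin hj hjn
  · have hle := hbound (i - n) j (by omega) (by omega) hj hjn
    have hne : c j + m ≠ c (i - n) := fun h ↦
      absurd (hstrict (i - n) j (by omega) (by omega) hj hjn h) (by omega)
    have := hc (i - n)
    rw [sub_add_cancel] at this
    omega

theorem sub_le_of_lt_add (hn : 0 < n) {i j : ℤ} (hij : i < j + n) (hji : j < i + n) :
    c i - c j ≤ m := by
  obtain ⟨b, k, hb, hbn, rfl⟩ := exists_eq_add_mul_of_pos hn j
  have h := sub_le_of_lt_add_of_mem_Icc hc hbound hstrict (i := i - k * n) hb hbn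
    (by omega) (by omega)
  have := apply_add_mul_eq hc (i - k * n) k
  rw [sub_add_cancel] at this
  rw [apply_add_mul_eq hc]
  omega

end QuasiPeriodic

theorem lt_of_add_eq_of_forall_sub_le {c : ℤ → ℤ} {n m : ℤ} (hm : 0 < m)
    (hc : ∀ i, c (i + n) = c i + 1)
    (h : ∀ i j, 1 ≤ i → 1 ≤ j → i < j + n → j < i + n → c i - c j ≤ m)
    {i j : ℤ} (hi : 1 ≤ i) (hj : 1 ≤ j) (hjn : j ≤ n) (heq : c j + m = c i) : j < i := by
  by_contra! hji
  rcases hji.eq_or_lt with rfl | hij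
  · omega
  · have := h (i + n) j (by omega) hj (by omega) (by omega)
    rw [hc] at this
    omega

theorem stmt_14_general (m n : ℕ) (hm : 0 < m) (hn : 0 < n)
    (c : ℤ → ℤ) (hper : ∀ i : ℤ, c (i + n) = c i + 1) :
    (∀ t : ℤ, 1 ≤ t → ∀ i j : ℤ, t ≤ i → i < t + n → t ≤ j → j < t + n →
        c i - c j ≤ m) ↔
      ((∀ i j : ℤ, 1 ≤ i → i ≤ n → 1 ≤ j → j ≤ n → c i - c j ≤ m) ∧
        (∀ i j : ℤ, 1 ≤ i → i ≤ n → 1 ≤ j → j ≤ n → c j + m = c i → j < i)) := by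
  rw [forall_window_sub_le_iff]
  constructor
  · intro h
    refine ⟨fun i j hi hin hj hjn ↦ h i j hi hj (by omega) (by omega), ?_⟩
    exact fun i j hi _ hj hjn ↦
      lt_of_add_eq_of_forall_sub_le (by exact_mod_cast hm) hper h hi hj hjn
  · rintro ⟨hbound, hstrict⟩ i j _ _ hij hji
    exact sub_le_of_lt_add hper hbound hstrict (by exact_mod_cast hn) hij hji

/-- Let `m, n` be coprime positive integers and let
`c : ℤ → ℤ` be a sequence with `c_{i+n} = c_i + 1` whose values on `{1,…,n}` are
nonnegative.  Then every length-`n` window `{t, …, t+n−1}` (for `t > 0`)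
satisfies `max − min ≤ m` iff the first window satisfies `max − min ≤ m` and
whenever `c_j + m = c_i` (with `1 ≤ i, j ≤ n`) one has `j < i`. -/
theorem stmt_14 (m n : ℕ) (hm : 0 < m) (hn : 0 < n) (hco : Nat.Coprime m n)
    (c : ℤ → ℤ) (hper : ∀ i : ℤ, c (i + n) = c i + 1)
    (hpos : ∀ i : ℤ, 1 ≤ i → i ≤ n → 0 ≤ c i) :
    (∀ t : ℤ, 1 ≤ t → ∀ i j : ℤ, t ≤ i → i < t + n → t ≤ j → j < t + n →
        c i - c j ≤ m) ↔
      ((∀ i j : ℤ, 1 ≤ i → i ≤ n → 1 ≤ j → j ≤ n → c i - c j ≤ m) ∧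
        (∀ i j : ℤ, 1 ≤ i → i ≤ n → 1 ≤ j → j ≤ n → c j + m = c i → j < i)) :=
  stmt_14_general m n hm hn c hper
end

section
/- In the rational Cherednik algebra H_{t,c} of S_n, with τ = x_1·(1 2 ··· n) and λ = (1 2 ··· n)^{-1}·y_1, the following relations hold: τ·u_i = u_{i+1}·τ for i < n, τ·u_n = (u_1 − t)·τ, λ·u_i = u_{i−1}·λ for i > 1, λ·u_1 = (u_n + t)·λ, τ·λ = u_1, λ·τ = u_n + t, and λ·s_1·τ = τ·s_{n−1}·λ + c, where u_i = x_i y_i − c·Σ_{j<i}(ij) are the Dunkl–Opdam elements and s_i = (i, i+1). -/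
/-- Generators of the rational Cherednik algebra `H_{t,c}(S_n, ℂ^n)`:
the `x_i`, the `y_i`, and the group elements of `S_n`. -/
inductive CherGen (n : ℕ) : Type
  | X : Fin n → CherGen n
  | Y : Fin n → CherGen n
  | G : Equiv.Perm (Fin n) → CherGen n

noncomputable def xF (n : ℕ) (i : Fin n) : FreeAlgebra ℂ (CherGen n) :=
  FreeAlgebra.ι ℂ (CherGen.X i)

noncomputable def yF (n : ℕ) (i : Fin n) : FreeAlgebra ℂ (CherGen n) :=
  FreeAlgebra.ι ℂ (CherGen.Y i)

noncomputable def gF (n : ℕ) (w : Equiv.Perm (Fin n)) : FreeAlgebra ℂ (CherGen n) :=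
  FreeAlgebra.ι ℂ (CherGen.G w)

/-- The defining relations of the rational Cherednik algebra `H_{t,c}(S_n, ℂ^n)`:
`S_n` group relations, the semidirect-product relations, commutativity of the
`x`'s and of the `y`'s, and `[y_i, x_j] = c·(ij)` for `i ≠ j`,
`[y_i, x_i] = t − c·∑_{j ≠ i} (ij)`. -/
inductive CherRel (n : ℕ) (t c : ℂ) :
    FreeAlgebra ℂ (CherGen n) → FreeAlgebra ℂ (CherGen n) → Prop
  | gmul (w w' : Equiv.Perm (Fin n)) : CherRel n t c (gF n w * gF n w') (gF n (w * w'))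
  | gone : CherRel n t c (gF n 1) 1
  | xx (i j : Fin n) : CherRel n t c (xF n i * xF n j) (xF n j * xF n i)
  | yy (i j : Fin n) : CherRel n t c (yF n i * yF n j) (yF n j * yF n i)
  | gx (w : Equiv.Perm (Fin n)) (i : Fin n) :
      CherRel n t c (gF n w * xF n i) (xF n (w i) * gF n w)
  | gy (w : Equiv.Perm (Fin n)) (i : Fin n) :
      CherRel n t c (gF n w * yF n i) (yF n (w i) * gF n w)
  | yx (i j : Fin n) (h : i ≠ j) :
      CherRel n t c (yF n i * xF n j) (xF n j * yF n i + c • gF n (Equiv.swap i j))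
  | yxd (i : Fin n) :
      CherRel n t c (yF n i * xF n i)
        (xF n i * yF n i + t • (1 : FreeAlgebra ℂ (CherGen n))
          - c • ∑ j ∈ Finset.univ.erase i, gF n (Equiv.swap i j))

/-- The rational Cherednik algebra `H_{t,c}(S_n, ℂ^n)`. -/
noncomputable abbrev Cher (n : ℕ) (t c : ℂ) := RingQuot (CherRel n t c)

noncomputable def xC (n : ℕ) (t c : ℂ) (i : Fin n) : Cher n t c :=
  RingQuot.mkAlgHom ℂ (CherRel n t c) (xF n i)

noncomputable def yC (n : ℕ) (t c : ℂ) (i : Fin n) : Cher n t c :=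
  RingQuot.mkAlgHom ℂ (CherRel n t c) (yF n i)

noncomputable def gC (n : ℕ) (t c : ℂ) (w : Equiv.Perm (Fin n)) : Cher n t c :=
  RingQuot.mkAlgHom ℂ (CherRel n t c) (gF n w)

/-- The Dunkl–Opdam element `u_i = x_i y_i − c·∑_{j < i} (ji)`. -/
noncomputable def uC (n : ℕ) (t c : ℂ) (i : Fin n) : Cher n t c :=
  xC n t c i * yC n t c i -
    c • ∑ j ∈ Finset.univ.filter (fun j => j < i), gC n t c (Equiv.swap j i)


/-- The shift operator `τ = x_1·(1 2 ⋯ n)`, where `(1 2 ⋯ n)` is the `n`-cycle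
`i ↦ i + 1`. -/
noncomputable def tauC (n : ℕ) [NeZero n] (t c : ℂ) : Cher n t c :=
  xC n t c 0 * gC n t c (Equiv.addRight (1 : Fin n))

/-- The shift operator `λ = (1 2 ⋯ n)⁻¹·y_1`. -/
noncomputable def lamC (n : ℕ) [NeZero n] (t c : ℂ) : Cher n t c :=
  gC n t c (Equiv.addRight (1 : Fin n))⁻¹ * yC n t c 0

/-!
Write `s` for the group element of the cycle `i ↦ i + 1`, so that `τ = x_1 s` and `λ = s⁻¹ y_1`.
Conjugation by `s` shifts every index by one and turns `u_i` into
`x_{i+1} y_{i+1} − c ∑_{1 < k < i+1} (k, i+1)`; the missing term `c (1, i+1)` is exactly what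
moving `x_1` (or `y_1`) past `x_{i+1} y_{i+1}` produces. This gives `τ u_i = u_{i+1} τ` and
`λ u_i = u_{i−1} λ` away from the wrap-around. Next, `τ λ = x_1 y_1 = u_1`, and `λ τ = u_n + t`
is the relation for `y_1 x_1` conjugated by `s`; the two wrap-around relations follow from these:
`τ u_n = τ (λ τ − t) = (u_1 − t) τ` and `λ u_1 = λ τ λ = (u_n + t) λ`. Finally both `λ s_1 τ`
and `τ s_{n−1} λ` reduce to `x_1 (n 1) y_1`, the former up to the `c` coming from
`[y_2, x_1] = c (1 2)`.
-/

namespace Fin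

open Finset

variable {n : ℕ} [NeZero n]

theorem add_one_ne_zero_of_val_add_one_lt {i : Fin n} (h : (i : ℕ) + 1 < n) : i + 1 ≠ 0 := by
  intro h0
  have := val_add_one_of_lt' h
  rw [h0, val_zero] at this
  omega

theorem map_addRight_one_filter_lt {i : Fin n} (h : i + 1 ≠ 0) :
    (univ.filter (· < i)).map (Equiv.addRight (1 : Fin n)).toEmbedding
      = (univ.filter (· < i + 1)).erase 0 := by
  obtain ⟨m, rfl⟩ := Nat.exists_eq_succ_of_ne_zero (NeZero.ne n)
  ext k
  obtain ⟨j, rfl⟩ : ∃ j, k = j + 1 := ⟨k - 1, by simp⟩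
  simp only [mem_map_equiv, mem_filter, mem_univ, true_and, mem_erase, Equiv.addRight_symm,
    Equiv.coe_addRight, add_neg_cancel_right, ne_eq, Fin.ext_iff, Fin.lt_def, Fin.val_add_one,
    Fin.val_zero, Fin.val_last] at h ⊢
  grind

theorem map_addRight_one_filter_lt_neg_one :
    (univ.filter (· < (-1 : Fin n))).map (Equiv.addRight (1 : Fin n)).toEmbedding
      = univ.erase 0 := by
  obtain ⟨m, rfl⟩ := Nat.exists_eq_succ_of_ne_zero (NeZero.ne n)
  ext k
  obtain ⟨j, rfl⟩ : ∃ j, k = j + 1 := ⟨k - 1, by simp⟩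
  simp only [mem_map_equiv, mem_filter, mem_univ, true_and, mem_erase, Equiv.addRight_symm,
    Equiv.coe_addRight, add_neg_cancel_right, ne_eq, Fin.ext_iff, Fin.lt_def, Fin.val_add_one,
    Fin.val_zero, Fin.val_last, Fin.coe_neg_one]
  grind

end Fin

namespace Cher

open Finset Equiv

variable {n : ℕ} {t c : ℂ}

theorem gC_mul_gC (v w : Perm (Fin n)) : gC n t c v * gC n t c w = gC n t c (v * w) := by
  simp only [gC, ← map_mul]
  exact RingQuot.mkAlgHom_rel ℂ (CherRel.gmul v w)

theorem gC_one : gC n t c 1 = 1 := by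
  simpa [gC] using RingQuot.mkAlgHom_rel ℂ (CherRel.gone (n := n) (t := t) (c := c))

theorem gC_mul_gC_inv (w : Perm (Fin n)) : gC n t c w * gC n t c w⁻¹ = 1 := by
  rw [gC_mul_gC, mul_inv_cancel, gC_one]

theorem gC_inv_mul_gC (w : Perm (Fin n)) : gC n t c w⁻¹ * gC n t c w = 1 := by
  rw [gC_mul_gC, inv_mul_cancel, gC_one]

theorem gC_mul_xC (w : Perm (Fin n)) (i : Fin n) :
    gC n t c w * xC n t c i = xC n t c (w i) * gC n t c w := by
  simp only [gC, xC, ← map_mul]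
  exact RingQuot.mkAlgHom_rel ℂ (CherRel.gx w i)

theorem gC_mul_yC (w : Perm (Fin n)) (i : Fin n) :
    gC n t c w * yC n t c i = yC n t c (w i) * gC n t c w := by
  simp only [gC, yC, ← map_mul]
  exact RingQuot.mkAlgHom_rel ℂ (CherRel.gy w i)

theorem xC_mul_xC (i j : Fin n) : xC n t c i * xC n t c j = xC n t c j * xC n t c i := by
  simp only [xC, ← map_mul]
  exact RingQuot.mkAlgHom_rel ℂ (CherRel.xx i j)

theorem yC_mul_yC (i j : Fin n) : yC n t c i * yC n t c j = yC n t c j * yC n t c i := by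
  simp only [yC, ← map_mul]
  exact RingQuot.mkAlgHom_rel ℂ (CherRel.yy i j)

theorem yC_mul_xC_of_ne {i j : Fin n} (h : i ≠ j) :
    yC n t c i * xC n t c j = xC n t c j * yC n t c i + c • gC n t c (swap i j) := by
  simp only [yC, xC, gC, ← map_mul, ← map_smul, ← map_add]
  exact RingQuot.mkAlgHom_rel ℂ (CherRel.yx i j h)

theorem yC_mul_xC_self (i : Fin n) :
    yC n t c i * xC n t c i
      = xC n t c i * yC n t c i + t • 1 - c • ∑ j ∈ univ.erase i, gC n t c (swap i j) := by
  simp only [yC, xC, gC, ← map_mul, ← map_sum, ← map_one (RingQuot.mkAlgHom ℂ (CherRel n t c)),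
    ← map_smul, ← map_add, ← map_sub]
  exact RingQuot.mkAlgHom_rel ℂ (CherRel.yxd i)

theorem gC_mul_gC_swap (w : Perm (Fin n)) (a b : Fin n) :
    gC n t c w * gC n t c (swap a b) = gC n t c (swap (w a) (w b)) * gC n t c w := by
  rw [gC_mul_gC, mul_swap_eq_swap_mul, gC_mul_gC]

theorem commute_gC_swap_xC {a b k : Fin n} (ha : k ≠ a) (hb : k ≠ b) :
    Commute (gC n t c (swap a b)) (xC n t c k) := by
  rw [Commute, SemiconjBy, gC_mul_xC, swap_apply_of_ne_of_ne ha hb]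

theorem commute_gC_swap_yC {a b k : Fin n} (ha : k ≠ a) (hb : k ≠ b) :
    Commute (gC n t c (swap a b)) (yC n t c k) := by
  rw [Commute, SemiconjBy, gC_mul_yC, swap_apply_of_ne_of_ne ha hb]

variable (n t c) in
/-- `u_i` with the sum over an arbitrary index set: conjugating by `w ∈ S_n` replaces `{j < i}`
by its image under `w`. -/
noncomputable def uSetC (S : Finset (Fin n)) (i : Fin n) : Cher n t c :=
  xC n t c i * yC n t c i - c • ∑ j ∈ S, gC n t c (swap j i)

theorem uSetC_filter_lt (i : Fin n) : uSetC n t c (univ.filter (· < i)) i = uC n t c i := rfl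

theorem gC_mul_uSetC (w : Perm (Fin n)) (S : Finset (Fin n)) (i : Fin n) :
    gC n t c w * uSetC n t c S i = uSetC n t c (S.map w.toEmbedding) (w i) * gC n t c w := by
  simp only [uSetC, mul_sub, sub_mul, mul_smul_comm, smul_mul_assoc, mul_sum, sum_mul,
    ← mul_assoc, gC_mul_xC, sum_map, coe_toEmbedding]
  simp only [mul_assoc, gC_mul_yC, gC_mul_gC_swap]

theorem gC_inv_mul_uSetC_map (w : Perm (Fin n)) (S : Finset (Fin n)) (i : Fin n) :
    gC n t c w⁻¹ * uSetC n t c (S.map w.toEmbedding) (w i) = uSetC n t c S i * gC n t c w⁻¹ := by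
  rw [gC_mul_uSetC, map_map]
  simp

theorem uSetC_mul_xC {S : Finset (Fin n)} {i k : Fin n} (hk : k ∈ S) (hki : k ≠ i) :
    uSetC n t c S i * xC n t c k = xC n t c k * uSetC n t c (S.erase k) i := by
  have hx : xC n t c i * yC n t c i * xC n t c k
      = xC n t c k * (xC n t c i * yC n t c i) + c • (xC n t c i * gC n t c (swap k i)) := by
    rw [mul_assoc, yC_mul_xC_of_ne hki.symm, mul_add, ← mul_assoc, xC_mul_xC, mul_assoc,
      mul_smul_comm, swap_comm]
  have hsum : (∑ j ∈ S, gC n t c (swap j i)) * xC n t c k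
      = xC n t c i * gC n t c (swap k i) + xC n t c k * ∑ j ∈ S.erase k, gC n t c (swap j i) := by
    rw [← add_sum_erase S _ hk, add_mul, gC_mul_xC, swap_apply_left, sum_mul, mul_sum]
    congr 1
    refine sum_congr rfl fun j hj => (commute_gC_swap_xC (ne_of_mem_erase hj).symm hki).eq
  rw [uSetC, uSetC, sub_mul, smul_mul_assoc, hx, hsum, mul_sub, mul_smul_comm]
  module

theorem yC_mul_uSetC {S : Finset (Fin n)} {i k : Fin n} (hk : k ∈ S) (hki : k ≠ i) :
    yC n t c k * uSetC n t c S i = uSetC n t c (S.erase k) i * yC n t c k := by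
  have hy : yC n t c k * (xC n t c i * yC n t c i)
      = xC n t c i * yC n t c i * yC n t c k + c • (yC n t c k * gC n t c (swap k i)) := by
    rw [← mul_assoc, yC_mul_xC_of_ne hki, add_mul, mul_assoc, yC_mul_yC, smul_mul_assoc,
      gC_mul_yC, swap_apply_right, mul_assoc]
  have hsum : yC n t c k * ∑ j ∈ S, gC n t c (swap j i)
      = yC n t c k * gC n t c (swap k i) + (∑ j ∈ S.erase k, gC n t c (swap j i)) * yC n t c k := by
    rw [← add_sum_erase S _ hk, mul_add, sum_mul, mul_sum]
    congr 1
    refine sum_congr rfl fun j hj => (commute_gC_swap_yC (ne_of_mem_erase hj).symm hki).eq.symm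
  rw [uSetC, uSetC, mul_sub, mul_smul_comm, hy, hsum, sub_mul, smul_mul_assoc]
  module

theorem yC_mul_xC_self_eq_uSetC (i : Fin n) :
    yC n t c i * xC n t c i = uSetC n t c (univ.erase i) i + t • 1 := by
  rw [yC_mul_xC_self, uSetC]
  simp only [swap_comm i]
  abel

theorem gC_mul_gC_swap_mul_gC_inv (w : Perm (Fin n)) (a b : Fin n) :
    gC n t c w * gC n t c (swap a b) * gC n t c w⁻¹ = gC n t c (swap (w a) (w b)) := by
  rw [gC_mul_gC_swap, mul_assoc, gC_mul_gC_inv, mul_one]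

section Shift

variable [NeZero n]

local notation "σ" => Equiv.addRight (1 : Fin n)

theorem gC_cycle_mul_uC {i : Fin n} (h : i + 1 ≠ 0) :
    gC n t c σ * uC n t c i
      = uSetC n t c ((univ.filter (· < i + 1)).erase 0) (i + 1) * gC n t c σ := by
  rw [← uSetC_filter_lt, gC_mul_uSetC, Fin.map_addRight_one_filter_lt h, coe_addRight]

theorem gC_cycle_inv_mul_uSetC {i : Fin n} (h : i ≠ 0) :
    gC n t c σ⁻¹ * uSetC n t c ((univ.filter (· < i)).erase 0) i
      = uC n t c (i - 1) * gC n t c σ⁻¹ := by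
  have h' : i - 1 + 1 ≠ 0 := by rwa [sub_add_cancel]
  have := gC_inv_mul_uSetC_map (t := t) (c := c) σ (univ.filter (· < i - 1)) (i - 1)
  simpa only [Fin.map_addRight_one_filter_lt h', coe_addRight, sub_add_cancel,
    uSetC_filter_lt] using this

theorem gC_cycle_inv_mul_uSetC_univ_erase_zero :
    gC n t c σ⁻¹ * uSetC n t c (univ.erase 0) 0 = uC n t c (-1) * gC n t c σ⁻¹ := by
  have := gC_inv_mul_uSetC_map (t := t) (c := c) σ (univ.filter (· < -1)) (-1)
  simpa only [Fin.map_addRight_one_filter_lt_neg_one, coe_addRight, neg_add_cancel,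
    uSetC_filter_lt] using this

theorem tauC_mul_lamC : tauC n t c * lamC n t c = uC n t c 0 := by
  have hnil : univ.filter (· < (0 : Fin n)) = ∅ :=
    filter_false_of_mem fun j _ => (Fin.zero_le j).not_gt
  rw [tauC, lamC, mul_assoc, ← mul_assoc (gC n t c σ), gC_mul_gC_inv, one_mul, uC, hnil, sum_empty,
    smul_zero, sub_zero]

theorem lamC_mul_tauC : lamC n t c * tauC n t c = uC n t c (-1) + t • 1 := by
  calc lamC n t c * tauC n t c
      = gC n t c σ⁻¹ * (yC n t c 0 * xC n t c 0) * gC n t c σ := by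
        simp only [lamC, tauC, mul_assoc]
    _ = uC n t c (-1) + t • 1 := by
        rw [yC_mul_xC_self_eq_uSetC, mul_add, gC_cycle_inv_mul_uSetC_univ_erase_zero, add_mul,
          mul_smul_comm, smul_mul_assoc, mul_one, mul_assoc, gC_inv_mul_gC, mul_one]

theorem tauC_mul_uC {i : Fin n} (h : i + 1 ≠ 0) :
    tauC n t c * uC n t c i = uC n t c (i + 1) * tauC n t c := by
  have h0 : (0 : Fin n) ∈ univ.filter (· < i + 1) := by simpa [Fin.pos_iff_ne_zero'] using h
  rw [tauC, mul_assoc, gC_cycle_mul_uC h, ← mul_assoc, ← mul_assoc, ← uSetC_filter_lt,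
    uSetC_mul_xC h0 (Ne.symm h)]

theorem lamC_mul_uC {i : Fin n} (h : i ≠ 0) :
    lamC n t c * uC n t c i = uC n t c (i - 1) * lamC n t c := by
  have h0 : (0 : Fin n) ∈ univ.filter (· < i) := by simpa [Fin.pos_iff_ne_zero'] using h
  rw [lamC, mul_assoc, ← uSetC_filter_lt, yC_mul_uSetC h0 (Ne.symm h), ← mul_assoc,
    gC_cycle_inv_mul_uSetC h, mul_assoc]

theorem tauC_mul_uC_neg_one :
    tauC n t c * uC n t c (-1) = (uC n t c 0 - t • 1) * tauC n t c := by
  rw [← tauC_mul_lamC, sub_mul, mul_assoc, lamC_mul_tauC, mul_add, smul_mul_assoc, one_mul,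
    mul_smul_comm, mul_one, add_sub_cancel_right]

theorem lamC_mul_uC_zero :
    lamC n t c * uC n t c 0 = (uC n t c (-1) + t • 1) * lamC n t c := by
  rw [← tauC_mul_lamC, ← mul_assoc, lamC_mul_tauC]

theorem lamC_mul_gC_swap_mul_tauC (h : (1 : Fin n) ≠ 0) :
    lamC n t c * gC n t c (swap 0 1) * tauC n t c
      = tauC n t c * gC n t c (swap (-2) (-1)) * lamC n t c + c • 1 := by
  have hyg : yC n t c 0 * gC n t c (swap 0 1) = gC n t c (swap 0 1) * yC n t c 1 := by
    rw [gC_mul_yC, swap_apply_right]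
  have hgg : gC n t c (swap 0 1) * gC n t c (swap 1 0) = 1 := by
    rw [gC_mul_gC, swap_comm, swap_mul_self, gC_one]
  have hx : gC n t c σ⁻¹ * xC n t c 1 = xC n t c 0 * gC n t c σ⁻¹ := by
    rw [gC_mul_xC]; simp
  have hy : yC n t c 1 * gC n t c σ = gC n t c σ * yC n t c 0 := by
    rw [gC_mul_yC]; simp
  have hconj : gC n t c σ⁻¹ * gC n t c (swap 0 1) * gC n t c σ = gC n t c (swap (-1) 0) := by
    simpa using gC_mul_gC_swap_mul_gC_inv (t := t) (c := c) σ⁻¹ 0 1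
  have hconj' : gC n t c σ * gC n t c (swap (-2) (-1)) * gC n t c σ⁻¹ = gC n t c (swap (-1) 0) := by
    have h2 : (-2 : Fin n) + 1 = -1 := by open Fin.CommRing in ring
    simpa [h2] using gC_mul_gC_swap_mul_gC_inv (t := t) (c := c) σ (-2) (-1)
  calc lamC n t c * gC n t c (swap 0 1) * tauC n t c
      = gC n t c σ⁻¹ * (gC n t c (swap 0 1) * (yC n t c 1 * xC n t c 0)) * gC n t c σ := by
        rw [lamC, tauC, mul_assoc (gC n t c _), hyg]; simp only [mul_assoc]
    _ = gC n t c σ⁻¹ * (xC n t c 1 * gC n t c (swap 0 1) * yC n t c 1 + c • 1) * gC n t c σ := by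
        rw [yC_mul_xC_of_ne h, mul_add, mul_smul_comm, hgg, ← mul_assoc, gC_mul_xC,
          swap_apply_left]
    _ = xC n t c 0 * (gC n t c σ⁻¹ * gC n t c (swap 0 1) * gC n t c σ) * yC n t c 0 + c • 1 := by
        simp only [mul_add, add_mul, mul_smul_comm, smul_mul_assoc, mul_one, gC_inv_mul_gC,
          ← mul_assoc, hx]
        rw [mul_assoc _ (yC n t c 1), hy, ← mul_assoc]
    _ = tauC n t c * gC n t c (swap (-2) (-1)) * lamC n t c + c • 1 := by
        rw [hconj, ← hconj', tauC, lamC]; simp only [mul_assoc]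

end Shift

end Cher

/-- In 0-based indexing, `u_n` is `uC n t c (-1)` and `s_{n−1}` swaps `-2` and `-1`. -/
theorem stmt_17 (n : ℕ) [NeZero n] (hn : 2 ≤ n) (t c : ℂ) :
    (∀ i : Fin n, (i : ℕ) + 1 < n →
      tauC n t c * uC n t c i = uC n t c (i + 1) * tauC n t c) ∧
    (tauC n t c * uC n t c (-1) = (uC n t c 0 - t • 1) * tauC n t c) ∧
    (∀ i : Fin n, 0 < (i : ℕ) →
      lamC n t c * uC n t c i = uC n t c (i - 1) * lamC n t c) ∧
    (lamC n t c * uC n t c 0 = (uC n t c (-1) + t • 1) * lamC n t c) ∧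
    (tauC n t c * lamC n t c = uC n t c 0) ∧
    (lamC n t c * tauC n t c = uC n t c (-1) + t • 1) ∧
    (lamC n t c * gC n t c (Equiv.swap 0 1) * tauC n t c
      = tauC n t c * gC n t c (Equiv.swap (-2) (-1)) * lamC n t c + c • 1) := by
  have hone : (1 : Fin n) ≠ 0 := by
    obtain ⟨m, rfl⟩ := Nat.exists_eq_add_of_le' hn
    exact one_ne_zero
  exact ⟨fun i hi => Cher.tauC_mul_uC (Fin.add_one_ne_zero_of_val_add_one_lt hi),
    Cher.tauC_mul_uC_neg_one,
    fun i hi => Cher.lamC_mul_uC ((Fin.pos_iff_ne_zero' i).mp (Fin.val_pos_iff.mp hi)),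
    Cher.lamC_mul_uC_zero, Cher.tauC_mul_lamC, Cher.lamC_mul_tauC,
    Cher.lamC_mul_gC_swap_mul_tauC hone⟩
end

section
/- Let m, n be coprime positive integers, C the curve x^m = y^n with local ring O_C = ℂ[[x,y]]/(x^m − y^n) ≅ ℂ[[x]]⟨1, y, ..., y^{n−1}⟩. Suppose I ⊆ O_C is the ℂ[[x]]-span of y^{α_1}x^{c_1},...,y^{α_n}x^{c_n} where {α_1,...,α_n} = {0,...,n−1}. Then: (a) if max(c_i) − min(c_i) > m, then I is not an ideal of O_C for any assignment of the α_i; (b) if max(c_i) − min(c_i) ≤ m, there exists exactly one assignment of the α_i making I an ideal of O_C. -/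
/-- The monomial `y^α x^k` of the ring `O_C = ℂ[[x]]⟨1, y, …, y^{n−1}⟩`, viewed
in the free `ℂ[[x]]`-module `Fin n → ℂ[[x]]` with basis `1, y, …, y^{n−1}`. -/
noncomputable def monP (n : ℕ) (α : Fin n) (k : ℕ) : Fin n → PowerSeries ℂ :=
  fun j => if j = α then (PowerSeries.X : PowerSeries ℂ) ^ k else 0

/-- Multiplication by `y` on `O_C` for the curve `x^m = y^n`:
`y · y^j = y^{j+1}` for `j < n−1` and `y · y^{n−1} = x^m`. -/
noncomputable def Yop (n m : ℕ) [NeZero n] :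
    (Fin n → PowerSeries ℂ) → (Fin n → PowerSeries ℂ) :=
  fun v j => (if j = 0 then (PowerSeries.X : PowerSeries ℂ) ^ m else 1) * v (j - 1)

open PowerSeries

/-- The submodule of componentwise-divisible vectors. -/
noncomputable def Nsub (n : ℕ) (d : Fin n → ℕ) : Submodule (PowerSeries ℂ) (Fin n → PowerSeries ℂ) where
  carrier := {v | ∀ j, (X : PowerSeries ℂ) ^ (d j) ∣ v j}
  add_mem' := fun ha hb j => by simpa using dvd_add (ha j) (hb j)
  zero_mem' := fun j => dvd_zero _
  smul_mem' := fun r v hv j => by simpa [smul_eq_mul] using (hv j).mul_left r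

lemma mem_Nsub {n : ℕ} {d : Fin n → ℕ} {v : Fin n → PowerSeries ℂ} :
    v ∈ Nsub n d ↔ ∀ j, (X : PowerSeries ℂ) ^ (d j) ∣ v j := Iff.rfl

lemma X_pow_dvd_X_pow_iff (a b : ℕ) : (X : PowerSeries ℂ) ^ a ∣ X ^ b ↔ a ≤ b := by
  constructor
  · intro h
    by_contra hab
    push_neg at hab
    rw [PowerSeries.X_pow_dvd_iff] at h
    have := h b hab
    simp [PowerSeries.coeff_X_pow] at this
  · exact fun h => pow_dvd_pow _ h

lemma monP_mem {n : ℕ} (d : Fin n → ℕ) (j : Fin n) (k : ℕ) :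
    monP n j k ∈ Nsub n d ↔ d j ≤ k := by
  constructor
  · intro h
    have := h j
    simpa [monP, X_pow_dvd_X_pow_iff] using this
  · intro h p
    by_cases hp : p = j
    · subst hp; simpa [monP] using pow_dvd_pow (X : PowerSeries ℂ) h
    · simp [monP, hp]

lemma span_monP (n : ℕ) (d : Fin n → ℕ) :
    Submodule.span (PowerSeries ℂ) (Set.range fun j => monP n j (d j)) = Nsub n d := by
  apply le_antisymm
  · rw [Submodule.span_le]
    rintro _ ⟨j, rfl⟩
    intro p
    by_cases hp : p = j
    · subst hp; simp [monP]
    · simp [monP, hp]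
  · intro v hv
    choose u hu using hv
    have hv' : v = ∑ j : Fin n, u j • monP n j (d j) := by
      funext p
      simp only [Finset.sum_apply, Pi.smul_apply, monP, smul_eq_mul, mul_ite, mul_zero]
      rw [Finset.sum_ite_eq Finset.univ p (fun j => u j * X ^ (d j))]
      simp [hu p, mul_comm]
    rw [hv']
    exact Submodule.sum_mem _ fun j _ =>
      Submodule.smul_mem _ _ (Submodule.subset_span ⟨j, rfl⟩)

lemma Yop_monP (n m : ℕ) [NeZero n] (j : Fin n) (k : ℕ) :
    Yop n m (monP n j k) = monP n (j + 1) (k + if j + 1 = 0 then m else 0) := by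
  funext p
  simp only [Yop, monP]
  have hsub : p - 1 = j ↔ p = j + 1 := sub_eq_iff_eq_add
  by_cases hp : p = j + 1
  · subst hp
    rw [if_pos (hsub.mpr rfl), if_pos rfl]
    by_cases h0 : j + 1 = 0
    · rw [if_pos h0, if_pos h0, pow_add, mul_comm]
    · rw [if_neg h0, if_neg h0, one_mul, add_zero]
  · rw [if_neg (fun h => hp (hsub.mp h)), if_neg hp, mul_zero]

/-- The invariance condition in terms of the exponents. -/
lemma inv_iff (n m : ℕ) [NeZero n] (d : Fin n → ℕ) :
    (∀ v ∈ Nsub n d, Yop n m v ∈ Nsub n d) ↔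
      ∀ j : Fin n, d (j + 1) ≤ d j + (if j + 1 = 0 then m else 0) := by
  constructor
  · intro h j
    have hmem : monP n j (d j) ∈ Nsub n d := (monP_mem d j (d j)).mpr le_rfl
    have := h _ hmem
    rw [Yop_monP] at this
    exact (monP_mem d _ _).mp this
  · intro h v hv p
    simp only [Yop]
    have hj : p = (p - 1) + 1 := by rw [sub_add_cancel]
    set j := p - 1 with hjd
    have hd : d p ≤ d j + (if p = 0 then m else 0) := by
      have := h j
      rw [← hj] at this
      exact this
    have hdvd : (X : PowerSeries ℂ) ^ (d j) ∣ v j := hv j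
    by_cases h0 : p = 0
    · rw [if_pos h0]
      rw [if_pos h0] at hd
      calc (X : PowerSeries ℂ) ^ (d p) ∣ X ^ (m + d j) :=
            pow_dvd_pow _ (by omega)
        _ ∣ X ^ m * v j := by rw [pow_add]; exact mul_dvd_mul_left _ hdvd
    · rw [if_neg h0, one_mul]
      rw [if_neg h0] at hd
      exact dvd_trans (pow_dvd_pow _ (by omega)) hdvd

lemma antitone_of_step {n : ℕ} [NeZero n] {d : Fin n → ℕ}
    (h : ∀ j : Fin n, j + 1 ≠ 0 → d (j + 1) ≤ d j) : Antitone d := by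
  obtain ⟨k, rfl⟩ := Nat.exists_eq_succ_of_ne_zero (NeZero.ne n)
  rw [Fin.antitone_iff_succ_le]
  intro i
  have hne : (i.castSucc : Fin (k + 1)) + 1 ≠ 0 := by
    rw [show (i.castSucc : Fin (k + 1)) + 1 = i.succ from by
      ext; simp [Fin.val_add_one_of_lt, Fin.castSucc_lt_last]]
    exact Fin.succ_ne_zero i
  have := h i.castSucc hne
  rwa [show (i.castSucc : Fin (k + 1)) + 1 = i.succ from by
    ext; simp [Fin.val_add_one_of_lt, Fin.castSucc_lt_last]] at this

/-- The invariance condition implies the global spread bound. -/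
lemma spread_of_C {n m : ℕ} [NeZero n] {d : Fin n → ℕ}
    (h : ∀ j : Fin n, d (j + 1) ≤ d j + (if j + 1 = 0 then m else 0)) :
    ∀ i j : Fin n, d i ≤ d j + m := by
  have hanti : Antitone d := antitone_of_step (fun j hj => by
    have := h j; rwa [if_neg hj, add_zero] at this)
  obtain ⟨k, rfl⟩ := Nat.exists_eq_succ_of_ne_zero (NeZero.ne n)
  intro i j
  have hl : Fin.last k + 1 = 0 := by
    ext
    simp [Fin.add_def, Fin.val_last]
  have hwrap : d 0 ≤ d (Fin.last k) + m := by
    have := h (Fin.last k)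
    rwa [hl, if_pos rfl] at this
  have h1 : d i ≤ d 0 := hanti (Fin.zero_le i)
  have h2 : d (Fin.last k) ≤ d j := hanti (Fin.le_last j)
  omega

lemma range_reindex (n : ℕ) (c : Fin n → ℕ) (α : Equiv.Perm (Fin n)) :
    (Set.range fun i => monP n (α i) (c i)) =
      Set.range fun j => monP n j (c (α.symm j)) := by
  have : (fun i => monP n (α i) (c i)) = (fun j => monP n j (c (α.symm j))) ∘ α := by
    funext i; simp
  rw [this, Set.range_comp, Equiv.range_eq_univ, Set.image_univ]

/-- Let `m, n` be coprime positive integers, `C = {x^m = y^n}`,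
and suppose `I ⊆ O_C` is the `ℂ[[x]]`-span of monomials
`y^{α_1}x^{c_1}, …, y^{α_n}x^{c_n}` with `{α_1,…,α_n} = {0,…,n−1}` (i.e. `α` a
permutation).  Then (a) if `max c − min c > m`, `I` is not an ideal (i.e. not
`y`-invariant) for any choice of `α`; and (b) if `max c − min c ≤ m` there is
exactly one such ideal (a unique `y`-invariant submodule of this form). -/
theorem stmt_19 (m n : ℕ) [NeZero n] (hm : 0 < m) (hco : Nat.Coprime m n)
    (c : Fin n → ℕ) :
    ((∃ i j : Fin n, c j + m < c i) →
      ∀ α : Equiv.Perm (Fin n),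
        ¬ (∀ v ∈ Submodule.span (PowerSeries ℂ)
              (Set.range fun i => monP n (α i) (c i)),
            Yop n m v ∈ Submodule.span (PowerSeries ℂ)
              (Set.range fun i => monP n (α i) (c i)))) ∧
    ((∀ i j : Fin n, c i ≤ c j + m) →
      ∃! N : Submodule (PowerSeries ℂ) (Fin n → PowerSeries ℂ),
        (∃ α : Equiv.Perm (Fin n),
          N = Submodule.span (PowerSeries ℂ) (Set.range fun i => monP n (α i) (c i))) ∧
        ∀ v ∈ N, Yop n m v ∈ N) := by
  constructor
  · rintro ⟨i, j, hij⟩ α hinv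
    rw [range_reindex, span_monP] at hinv
    have hC := (inv_iff n m _).mp hinv
    have hsp := spread_of_C (d := fun p => c (α.symm p)) hC (α i) (α j)
    simp only [Equiv.symm_apply_apply] at hsp
    omega
  · intro hle
    set f : Fin n → ℕᵒᵈ := fun i => OrderDual.toDual (c i) with hf
    set σ : Equiv.Perm (Fin n) := Tuple.sort f with hσ
    have hmono : Monotone (f ∘ σ) := Tuple.monotone_sort f
    have hanti : Antitone (c ∘ σ) := fun a b hab => hmono hab
    set d : Fin n → ℕ := c ∘ σ with hd
    have hCd : ∀ j : Fin n, d (j + 1) ≤ d j + (if j + 1 = 0 then m else 0) := by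
      intro j
      by_cases h0 : j + 1 = 0
      · rw [if_pos h0, h0]
        exact hle (σ 0) (σ j)
      · rw [if_neg h0, add_zero]
        apply hanti
        -- j ≤ j + 1 since j + 1 ≠ 0
        obtain ⟨k, rfl⟩ := Nat.exists_eq_succ_of_ne_zero (NeZero.ne n)
        have hlt : (j : ℕ) < k := by
          by_contra hk
          have hjk : (j : ℕ) = k := by omega
          apply h0
          ext
          simp [Fin.add_def, hjk]
        have : ((j + 1 : Fin (k + 1)) : ℕ) = (j : ℕ) + 1 := by
          simp [Fin.add_def]; omega
        rw [Fin.le_def, this]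
        omega
    refine ⟨Nsub n d, ⟨⟨σ⁻¹, ?_⟩, (inv_iff n m d).mpr hCd⟩, ?_⟩
    · rw [range_reindex, span_monP]
      congr 1
    · rintro N' ⟨⟨α, rfl⟩, hinv'⟩
      rw [range_reindex, span_monP] at hinv' ⊢
      have hC' := (inv_iff n m _).mp hinv'
      have hanti' : Antitone (c ∘ α.symm) := antitone_of_step (fun j hj => by
        have := hC' j; rwa [if_neg hj, add_zero] at this)
      have hmono' : Monotone (f ∘ α.symm) := fun a b hab => hanti' hab
      have h1 : f ∘ (α.symm : Equiv.Perm (Fin n)) = f ∘ σ :=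
        Tuple.comp_sort_eq_comp_iff_monotone.mpr hmono'
      have h2 : c ∘ (α.symm : Equiv.Perm (Fin n)) = d := by
        funext p
        exact congrFun h1 p
      congr 1
end
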